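/- arXiv:2412.10532 — 2 statements merged into one kernel-verified Lean document; each statement's English description precedes it below -/
import Mathlib

section
/- Let n ≥ 3 and let r be an integer with 1 ≤ r ≤ n−2. The number of coconsistent subsets J of the 2-element subsets of [n] with contraction J/n = {{1},…,{r}} equals 2^{n−3} + C(n−1,r) − 1 (where C(n−1,r) is the binomial coefficient), and the number of coconsistent subsets J with contraction J/n = {{r+1},…,{n−1}} equals the same quantity. -/
open Finset

/-- The `k`-element subsets of `[n] = {1, …, n}`. -/
def ksubsets (n k : ℕ) : Finset (Finset ℕ) := (Finset.Icc 1 n).powersetCard k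

/-- The packet of `X`: all subsets of `X` with one element removed. -/
def packet (X : Finset ℕ) : Finset (Finset ℕ) := X.image (fun x => X.erase x)

/-- The copacket of `X` with respect to `[n]`: all sets `X ∪ {i}` for `i ∈ [n] \ X`. -/
def copacket (n : ℕ) (X : Finset ℕ) : Finset (Finset ℕ) :=
  ((Finset.Icc 1 n) \ X).image (fun i => insert i X)

/-- The lexicographic order on finite sets of naturals viewed as increasing lists:
`X < Y` iff there is `m ∈ X \ Y` below which `X` and `Y` agree. -/
def lexLt (X Y : Finset ℕ) : Prop :=
  ∃ m ∈ X, m ∉ Y ∧ ∀ a < m, (a ∈ X ↔ a ∈ Y)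

/-- `r` is a strict linear order on the collection `D`. -/
def IsStrictOrdOn (D : Finset (Finset ℕ)) (r : Finset ℕ → Finset ℕ → Prop) : Prop :=
  (∀ X ∈ D, ¬ r X X) ∧
  (∀ X ∈ D, ∀ Y ∈ D, ∀ Z ∈ D, r X Y → r Y Z → r X Z) ∧
  (∀ X ∈ D, ∀ Y ∈ D, X ≠ Y → r X Y ∨ r Y X)

/-- The restriction of `r` to `P` is the lex order. -/
def RestrLex (r : Finset ℕ → Finset ℕ → Prop) (P : Finset (Finset ℕ)) : Prop :=
  ∀ A ∈ P, ∀ B ∈ P, (r A B ↔ lexLt A B)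

/-- The restriction of `r` to `P` is the antilex order. -/
def RestrAntilex (r : Finset ℕ → Finset ℕ → Prop) (P : Finset (Finset ℕ)) : Prop :=
  ∀ A ∈ P, ∀ B ∈ P, (r A B ↔ lexLt B A)

/-- `r` is an admissible order on the `k`-element subsets of `[n]`. -/
def Admissible (n k : ℕ) (r : Finset ℕ → Finset ℕ → Prop) : Prop :=
  IsStrictOrdOn (ksubsets n k) r ∧
  ∀ X ∈ ksubsets n (k+1), RestrLex r (packet X) ∨ RestrAntilex r (packet X)

/-- `r` is a coadmissible order on the `k`-element subsets of `[n]`. -/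
def Coadmissible (n k : ℕ) (r : Finset ℕ → Finset ℕ → Prop) : Prop :=
  IsStrictOrdOn (ksubsets n k) r ∧
  ∀ X ∈ ksubsets n (k-1), RestrLex r (copacket n X) ∨ RestrAntilex r (copacket n X)

open scoped Classical in
/-- The reversal set of an order on the `k`-element subsets of `[n]`:
the `(k+1)`-element subsets whose packet is restricted to the antilex order. -/
noncomputable def Rev (n k : ℕ) (r : Finset ℕ → Finset ℕ → Prop) : Finset (Finset ℕ) :=
  (ksubsets n (k+1)).filter (fun X => RestrAntilex r (packet X))

open scoped Classical in
/-- The coreversal set of an order on the `k`-element subsets of `[n]`: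
the `(k-1)`-element subsets whose copacket is restricted to the antilex order. -/
noncomputable def Corev (n k : ℕ) (r : Finset ℕ → Finset ℕ → Prop) : Finset (Finset ℕ) :=
  (ksubsets n (k-1)).filter (fun X => RestrAntilex r (copacket n X))

/-- `P ∩ I` is a prefix (lower set) of `P` in lex order. -/
def IsLexPrefix (P I : Finset (Finset ℕ)) : Prop :=
  ∀ A ∈ P, ∀ B ∈ P, B ∈ I → lexLt A B → A ∈ I

/-- `P ∩ I` is a suffix (upper set) of `P` in lex order. -/
def IsLexSuffix (P I : Finset (Finset ℕ)) : Prop :=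
  ∀ A ∈ P, ∀ B ∈ P, A ∈ I → lexLt A B → B ∈ I

/-- `I` is a consistent subset of the `k`-element subsets of `[n]`. -/
def Consistent (n k : ℕ) (I : Finset (Finset ℕ)) : Prop :=
  I ⊆ ksubsets n k ∧
  ∀ X ∈ ksubsets n (k+1), IsLexPrefix (packet X) I ∨ IsLexSuffix (packet X) I

/-- `I` is a coconsistent subset of the `k`-element subsets of `[n]`. -/
def CoConsistent (n k : ℕ) (I : Finset (Finset ℕ)) : Prop :=
  I ⊆ ksubsets n k ∧
  ∀ X ∈ ksubsets n (k-1), IsLexPrefix (copacket n X) I ∨ IsLexSuffix (copacket n X) I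

/-- Deletion `I \ n` of a set of subsets. -/
def del (I : Finset (Finset ℕ)) (n : ℕ) : Finset (Finset ℕ) := I.filter (fun X => n ∉ X)

/-- Contraction `I / n` of a set of subsets. -/
def contr (I : Finset (Finset ℕ)) (n : ℕ) : Finset (Finset ℕ) :=
  (I.filter (fun X => n ∈ X)).image (fun X => X.erase n)

/-- Contraction `ρ / n` of a linear order: `X < Y` iff `X ∪ {n} < Y ∪ {n}` in `ρ`. -/
def contrOrd (r : Finset ℕ → Finset ℕ → Prop) (n : ℕ) : Finset ℕ → Finset ℕ → Prop :=
  fun X Y => r (insert n X) (insert n Y)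

/-- The Gale order: componentwise comparison of the increasing enumerations. -/
def galeLe (A B : Finset ℕ) : Prop :=
  List.Forall₂ (· ≤ ·) (A.sort (· ≤ ·)) (B.sort (· ≤ ·))

/-- The consistent poset relation `≺_I` on the `(k-1)`-element subsets of `[n]`:
within the packet of `X ∈ I` the antilex order, and within the packet of
`X ∉ I` the lex order, transitively closed. -/
def cpRel (n k : ℕ) (I : Finset (Finset ℕ)) : Finset ℕ → Finset ℕ → Prop :=
  Relation.TransGen (fun A B =>
    ∃ X ∈ ksubsets n k, A ∈ packet X ∧ B ∈ packet X ∧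
      ((X ∈ I ∧ lexLt B A) ∨ (X ∉ I ∧ lexLt A B)))

/-- A single-step-inclusion cover within the collection `C`. -/
def SSIStep (C : Finset (Finset ℕ) → Prop) (A B : Finset (Finset ℕ)) : Prop :=
  C A ∧ C B ∧ ∃ Y, Y ∉ A ∧ B = insert Y A

/-- The single step inclusion order on the collection `C`. -/
def SSILe (C : Finset (Finset ℕ) → Prop) : Finset (Finset ℕ) → Finset (Finset ℕ) → Prop :=
  Relation.ReflTransGen (SSIStep C)


-- ===== auxiliary development =====
/-- the edge `{x,y}` -/
def pr (x y : ℕ) : Finset ℕ := {x, y}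

lemma pr_comm (x y : ℕ) : pr x y = pr y x := Finset.pair_comm x y

lemma mem_pr {a x y : ℕ} : a ∈ pr x y ↔ a = x ∨ a = y := by
  simp [pr]

lemma pr_eq_pr {x y u v : ℕ} : pr x y = pr u v ↔ (x = u ∧ y = v) ∨ (x = v ∧ y = u) := by
  constructor
  · intro h
    have h2 : ({x, y} : Set ℕ) = {u, v} := by
      have := congrArg (fun (s : Finset ℕ) => (s : Set ℕ)) h
      simpa [pr] using this
    exact Set.pair_eq_pair_iff.mp h2
  · rintro (⟨rfl, rfl⟩ | ⟨rfl, rfl⟩)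
    · rfl
    · exact pr_comm x y

lemma pr_mem_ksubsets {n x y : ℕ} (hx : x ∈ Icc 1 n) (hy : y ∈ Icc 1 n) (hxy : x ≠ y) :
    pr x y ∈ ksubsets n 2 := by
  simp only [ksubsets, mem_powersetCard]
  constructor
  · intro a ha; rcases mem_pr.mp ha with rfl | rfl <;> assumption
  · rw [pr, Finset.card_insert_of_notMem (by simpa using hxy), card_singleton]

lemma mem_ksubsets_two {n : ℕ} {X : Finset ℕ} :
    X ∈ ksubsets n 2 ↔ ∃ x ∈ Icc 1 n, ∃ y ∈ Icc 1 n, x < y ∧ X = pr x y := by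
  constructor
  · intro h
    simp only [ksubsets, mem_powersetCard] at h
    obtain ⟨hsub, hcard⟩ := h
    obtain ⟨x, y, hxy, rfl⟩ := Finset.card_eq_two.mp hcard
    rcases lt_or_gt_of_ne hxy with h | h
    · exact ⟨x, hsub (by simp), y, hsub (by simp), h, rfl⟩
    · exact ⟨y, hsub (by simp), x, hsub (by simp), h, (pr_comm x y)⟩
  · rintro ⟨x, hx, y, hy, hxy, rfl⟩
    exact pr_mem_ksubsets hx hy hxy.ne

lemma lexLt_pr {x i j : ℕ} (hi : i ≠ x) (hj : j ≠ x) :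
    lexLt (pr x i) (pr x j) ↔ i < j := by
  constructor
  · rintro ⟨m, hm, hmY, hagree⟩
    rcases mem_pr.mp hm with h | h
    · exact absurd (mem_pr.mpr (Or.inl h)) hmY
    · have h' := h.symm
      subst h'
      -- m = i, i ∉ {x,j} so i ≠ j
      have hij : i ≠ j := by intro h; exact hmY (mem_pr.mpr (Or.inr h))
      by_contra hlt
      push_neg at hlt
      have hji : j < i := lt_of_le_of_ne hlt (Ne.symm hij)
      have := (hagree j hji).mpr (mem_pr.mpr (Or.inr rfl))
      rcases mem_pr.mp this with h | h
      · exact hj h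
      · exact hij h.symm
  · intro hij
    refine ⟨i, mem_pr.mpr (Or.inr rfl), ?_, ?_⟩
    · intro h; rcases mem_pr.mp h with h | h
      · exact hi h
      · exact absurd h hij.ne
    · intro a ha
      constructor
      · intro h; rcases mem_pr.mp h with rfl | rfl
        · exact mem_pr.mpr (Or.inl rfl)
        · omega
      · intro h; rcases mem_pr.mp h with rfl | rfl
        · exact mem_pr.mpr (Or.inl rfl)
        · omega

def DownAt (n : ℕ) (J : Finset (Finset ℕ)) (x : ℕ) : Prop :=
  ∀ i ∈ Icc 1 n, ∀ j ∈ Icc 1 n, i ≠ x → j ≠ x → i ≤ j → pr x j ∈ J → pr x i ∈ J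

def UpAt (n : ℕ) (J : Finset (Finset ℕ)) (x : ℕ) : Prop :=
  ∀ i ∈ Icc 1 n, ∀ j ∈ Icc 1 n, i ≠ x → j ≠ x → i ≤ j → pr x i ∈ J → pr x j ∈ J

lemma mem_ksubsets_one {n : ℕ} {X : Finset ℕ} :
    X ∈ ksubsets n 1 ↔ ∃ x ∈ Icc 1 n, X = {x} := by
  simp only [ksubsets, mem_powersetCard, Finset.card_eq_one]
  constructor
  · rintro ⟨hsub, a, rfl⟩; exact ⟨a, hsub (by simp), rfl⟩
  · rintro ⟨x, hx, rfl⟩; exact ⟨by simpa using hx, x, rfl⟩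

lemma copacket_singleton (n x : ℕ) :
    copacket n {x} = ((Icc 1 n) \ {x}).image (fun i => pr x i) := by
  unfold copacket
  apply Finset.image_congr
  intro i _
  show insert i {x} = pr x i
  rw [pr, Finset.pair_comm]

lemma coconsistent_two_iff {n : ℕ} (J : Finset (Finset ℕ)) :
    CoConsistent n 2 J ↔
      J ⊆ ksubsets n 2 ∧ ∀ x ∈ Icc 1 n, DownAt n J x ∨ UpAt n J x := by
  unfold CoConsistent
  constructor
  · rintro ⟨hsub, h⟩
    refine ⟨hsub, fun x hx => ?_⟩
    have hX : ({x} : Finset ℕ) ∈ ksubsets n 1 := mem_ksubsets_one.mpr ⟨x, hx, rfl⟩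
    rcases h _ hX with hpre | hsuf
    · left
      intro i hi j hj hix hjx hij hJ
      rcases eq_or_lt_of_le hij with rfl | hlt
      · exact hJ
      rw [copacket_singleton] at hpre
      exact hpre (pr x i) (mem_image.mpr ⟨i, by simp [hi, hix], rfl⟩)
        (pr x j) (mem_image.mpr ⟨j, by simp [hj, hjx], rfl⟩) hJ ((lexLt_pr hix hjx).mpr hlt)
    · right
      intro i hi j hj hix hjx hij hJ
      rcases eq_or_lt_of_le hij with rfl | hlt
      · exact hJ
      rw [copacket_singleton] at hsuf
      exact hsuf (pr x i) (mem_image.mpr ⟨i, by simp [hi, hix], rfl⟩)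
        (pr x j) (mem_image.mpr ⟨j, by simp [hj, hjx], rfl⟩) hJ ((lexLt_pr hix hjx).mpr hlt)
  · rintro ⟨hsub, h⟩
    refine ⟨hsub, fun X hX => ?_⟩
    obtain ⟨x, hx, rfl⟩ := mem_ksubsets_one.mp hX
    rcases h x hx with hd | hu
    · left
      rw [copacket_singleton]
      intro A hA B hB hBJ hlex
      obtain ⟨i, hi, rfl⟩ := mem_image.mp hA
      obtain ⟨j, hj, rfl⟩ := mem_image.mp hB
      simp only [mem_sdiff, Finset.mem_singleton] at hi hj
      have hlt := (lexLt_pr hi.2 hj.2).mp hlex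
      exact hd i hi.1 j hj.1 hi.2 hj.2 hlt.le hBJ
    · right
      rw [copacket_singleton]
      intro A hA B hB hAJ hlex
      obtain ⟨i, hi, rfl⟩ := mem_image.mp hA
      obtain ⟨j, hj, rfl⟩ := mem_image.mp hB
      simp only [mem_sdiff, Finset.mem_singleton] at hi hj
      have hlt := (lexLt_pr hi.2 hj.2).mp hlex
      exact hu i hi.1 j hj.1 hi.2 hj.2 hlt.le hAJ


-- interval helper lemmas
lemma downclosed_eq_Icc {r : ℕ} {D : Finset ℕ} (hsub : D ⊆ Icc 1 r)
    (hdc : ∀ i j : ℕ, 1 ≤ i → i ≤ j → j ∈ D → i ∈ D) : D = Icc 1 D.card := by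
  have hcard : D.card ≤ r := le_trans (card_le_card hsub) (by simp)
  apply Finset.eq_of_subset_of_card_le
  · intro j hj
    rw [mem_Icc]
    refine ⟨(mem_Icc.mp (hsub hj)).1, ?_⟩
    by_contra hgt
    push_neg at hgt
    have : Icc 1 j ⊆ D := fun i hi => hdc i j (mem_Icc.mp hi).1 (mem_Icc.mp hi).2 hj
    have := card_le_card this
    simp [Nat.card_Icc] at this
    omega
  · simp

lemma upclosed_eq_Icc {l u : ℕ} {D : Finset ℕ} (hl : 1 ≤ l) (hsub : D ⊆ Icc l u)
    (huc : ∀ i j : ℕ, i ≤ j → j ≤ u → i ∈ D → j ∈ D) : D = Icc (u + 1 - D.card) u := by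
  have hcard : D.card ≤ u + 1 - l := by
    have := card_le_card hsub; simpa [Nat.card_Icc] using this
  apply Finset.eq_of_subset_of_card_le
  · intro j hj
    rw [mem_Icc]
    have hju : j ≤ u := (mem_Icc.mp (hsub hj)).2
    refine ⟨?_, hju⟩
    by_contra hlt
    push_neg at hlt
    have : Icc j u ⊆ D := fun i hi => huc j i (mem_Icc.mp hi).1 (mem_Icc.mp hi).2 hj
    have := card_le_card this
    simp [Nat.card_Icc] at this
    omega
  · simp only [Nat.card_Icc]
    omega

-- filter card lemmas
lemma filter_ge_mono (D : Finset ℕ) {c c' : ℕ} (h : c ≤ c') :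
    (D.filter (fun t => c' ≤ t)).card ≤ (D.filter (fun t => c ≤ t)).card := by
  apply card_le_card
  intro t ht
  rw [mem_filter] at *
  exact ⟨ht.1, h.trans ht.2⟩

lemma filter_ge_card_le (D : Finset ℕ) (c c' : ℕ) (h : c ≤ c') :
    (D.filter (fun t => c ≤ t)).card ≤ (D.filter (fun t => c' ≤ t)).card + (c' - c) := by
  have hsplit : D.filter (fun t => c ≤ t) ⊆
      D.filter (fun t => c' ≤ t) ∪ Ico c c' := by
    intro t ht
    rw [mem_filter] at ht
    rcases le_or_gt c' t with h1 | h1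
    · exact mem_union_left _ (mem_filter.mpr ⟨ht.1, h1⟩)
    · exact mem_union_right _ (mem_Ico.mpr ⟨ht.2, h1⟩)
  calc (D.filter (fun t => c ≤ t)).card ≤ _ := card_le_card hsplit
    _ ≤ (D.filter (fun t => c' ≤ t)).card + (Ico c c').card := card_union_le _ _
    _ = _ := by rw [Nat.card_Ico]

open scoped Classical in
noncomputable def graphOf (n : ℕ) (f : ℕ → ℕ → Prop) : Finset (Finset ℕ) :=
  (((Icc 1 n) ×ˢ (Icc 1 n)).filter (fun p => p.1 < p.2 ∧ f p.1 p.2)).image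
    (fun p => pr p.1 p.2)

lemma mem_graphOf {n : ℕ} {f : ℕ → ℕ → Prop} {X : Finset ℕ} :
    X ∈ graphOf n f ↔ ∃ x ∈ Icc 1 n, ∃ y ∈ Icc 1 n, x < y ∧ f x y ∧ X = pr x y := by
  classical
  unfold graphOf
  rw [mem_image]
  constructor
  · rintro ⟨p, hp, rfl⟩
    rw [mem_filter, mem_product] at hp
    exact ⟨p.1, hp.1.1, p.2, hp.1.2, hp.2.1, hp.2.2, rfl⟩
  · rintro ⟨x, hx, y, hy, hxy, hf, rfl⟩
    exact ⟨(x, y), by rw [mem_filter, mem_product]; exact ⟨⟨hx, hy⟩, hxy, hf⟩, rfl⟩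

lemma pr_mem_graphOf {n : ℕ} {f : ℕ → ℕ → Prop} {x y : ℕ} :
    pr x y ∈ graphOf n f ↔
      (x ∈ Icc 1 n ∧ y ∈ Icc 1 n ∧ ((x < y ∧ f x y) ∨ (y < x ∧ f y x))) := by
  rw [mem_graphOf]
  constructor
  · rintro ⟨u, hu, v, hv, huv, hf, heq⟩
    rcases pr_eq_pr.mp heq.symm with ⟨rfl, rfl⟩ | ⟨rfl, rfl⟩
    · exact ⟨hu, hv, Or.inl ⟨huv, hf⟩⟩
    · exact ⟨hv, hu, Or.inr ⟨huv, hf⟩⟩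
  · rintro ⟨hx, hy, (⟨hlt, hf⟩ | ⟨hlt, hf⟩)⟩
    · exact ⟨x, hx, y, hy, hlt, hf, rfl⟩
    · exact ⟨y, hy, x, hx, hlt, hf, pr_comm x y⟩

lemma graphOf_subset {n : ℕ} {f : ℕ → ℕ → Prop} : graphOf n f ⊆ ksubsets n 2 := by
  intro X hX
  obtain ⟨x, hx, y, hy, hxy, _, rfl⟩ := mem_graphOf.mp hX
  exact pr_mem_ksubsets hx hy hxy.ne

/-- staircase condition: in `stair T`, `a ~ b` -/
def scond (n r : ℕ) (T : Finset ℕ) (a b : ℕ) : Prop :=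
  a ≤ (T.filter (fun t => n + r + 1 - a - b ≤ t)).card

def stairf (n r : ℕ) (T : Finset ℕ) : ℕ → ℕ → Prop := fun x y =>
  x ≤ r ∧ (y = n ∨ (r + 1 ≤ y ∧ y ≤ n - 1 ∧ scond n r T x y))

noncomputable def stair (n r : ℕ) (T : Finset ℕ) : Finset (Finset ℕ) :=
  graphOf n (stairf n r T)

/-- suffix-graph condition on `[1,r]` -/
def sufc (r : ℕ) (DA : Finset ℕ) (x y : ℕ) : Prop :=
  r + 1 ≤ (DA.filter (fun t => y - x ≤ t)).card + y

/-- prefix-graph condition on `[r+1, n-1]` -/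
def prec (r : ℕ) (DB : Finset ℕ) (x y : ℕ) : Prop :=
  x ≤ (DB.filter (fun t => y - x ≤ t)).card + r

def fullf (n r : ℕ) (DA DB : Finset ℕ) : ℕ → ℕ → Prop := fun x y =>
  (x ≤ r ∧ r + 1 ≤ y) ∨ (y ≤ r ∧ sufc r DA x y) ∨
    (r + 1 ≤ x ∧ y ≤ n - 1 ∧ prec r DB x y)

noncomputable def fullg (n r : ℕ) (DA DB : Finset ℕ) : Finset (Finset ℕ) :=
  graphOf n (fullf n r DA DB)

/-- closure property of the suffix condition -/
lemma sufc_closure {r : ℕ} {DA : Finset ℕ} {x y x2 y2 : ℕ} (h : sufc r DA x y)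
    (hx : x ≤ x2) (hy : y ≤ y2) (hxy : x < y) (hxy2 : x2 < y2) :
    sufc r DA x2 y2 := by
  unfold sufc at *
  rcases le_or_gt (y2 - x2) (y - x) with hc | hc
  · have := filter_ge_mono DA hc
    omega
  · have := filter_ge_card_le DA (y - x) (y2 - x2) hc.le
    omega

/-- closure property of the prefix condition -/
lemma prec_closure {r : ℕ} {DB : Finset ℕ} {x y x2 y2 : ℕ} (h : prec r DB x y)
    (hx : x2 ≤ x) (hy : y2 ≤ y) (hxy : x < y) (hxy2 : x2 < y2) :
    prec r DB x2 y2 := by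
  unfold prec at *
  rcases le_or_gt (y2 - x2) (y - x) with hc | hc
  · have := filter_ge_mono DB hc
    omega
  · have := filter_ge_card_le DB (y - x) (y2 - x2) hc.le
    omega

/-- closure property of the staircase condition -/
lemma scond_closure {n r : ℕ} {T : Finset ℕ} {a b a2 b2 : ℕ} (h : scond n r T a b)
    (ha : a2 ≤ a) (hb : b ≤ b2) : scond n r T a2 b2 := by
  unfold scond at *
  rcases le_or_gt (n + r + 1 - a2 - b2) (n + r + 1 - a - b) with hc | hc
  · have := filter_ge_mono T hc
    omega
  · have := filter_ge_card_le T (n + r + 1 - a - b) (n + r + 1 - a2 - b2) hc.le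
    omega

section sound
variable {n r : ℕ} (hn : 3 ≤ n) (hr1 : 1 ≤ r) (hr2 : r ≤ n - 2)

include hn hr1 hr2 in
lemma stair_upDown (T : Finset ℕ) :
    ∀ x ∈ Icc 1 n, DownAt n (stair n r T) x ∨ UpAt n (stair n r T) x := by
  intro x hx
  rw [mem_Icc] at hx
  rcases le_or_gt x r with hxr | hxr
  · right
    intro i hi j hj hix hjx hij hJ
    rw [mem_Icc] at hi hj
    rcases (pr_mem_graphOf.mp hJ).2.2 with ⟨hlt, hf⟩ | ⟨hlt, hf⟩
    · -- x < i, stairf x i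
      obtain ⟨_, hcase⟩ := hf
      apply pr_mem_graphOf.mpr
      refine ⟨by simp; omega, by simp; omega, Or.inl ⟨?_, hxr, ?_⟩⟩
      · rcases hcase with rfl | ⟨h1, _, _⟩ <;> omega
      · rcases hcase with rfl | ⟨h1, h2, h3⟩
        · left; omega
        · rcases eq_or_lt_of_le (show j ≤ n by omega) with rfl | hjn
          · left; rfl
          · right
            exact ⟨by omega, by omega, scond_closure h3 le_rfl hij⟩
    · -- i < x, stairf i x : impossible since x ≤ r
      obtain ⟨_, hcase⟩ := hf
      rcases hcase with rfl | ⟨h1, _, _⟩ <;> omega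
  · left
    intro i hi j hj hix hjx hij hJ
    rw [mem_Icc] at hi hj
    rcases (pr_mem_graphOf.mp hJ).2.2 with ⟨hlt, hf⟩ | ⟨hlt, hf⟩
    · -- x < j, stairf x j : impossible since r < x
      obtain ⟨h0, _⟩ := hf
      omega
    · -- j < x, stairf j x
      obtain ⟨hjr, hcase⟩ := hf
      apply pr_mem_graphOf.mpr
      refine ⟨by simp; omega, by simp; omega, Or.inr ⟨by omega, by omega, ?_⟩⟩
      rcases hcase with rfl | ⟨h1, h2, h3⟩
      · left; rfl
      · right
        exact ⟨h1, h2, scond_closure h3 hij le_rfl⟩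

include hn hr1 hr2 in
lemma fullg_upDown (DA DB : Finset ℕ) :
    ∀ x ∈ Icc 1 n, DownAt n (fullg n r DA DB) x ∨ UpAt n (fullg n r DA DB) x := by
  intro x hx
  rw [mem_Icc] at hx
  rcases le_or_gt x r with hxr | hxr
  · right
    intro i hi j hj hix hjx hij hJ
    rw [mem_Icc] at hi hj
    apply pr_mem_graphOf.mpr
    refine ⟨by simp; omega, by simp; omega, ?_⟩
    rcases (pr_mem_graphOf.mp hJ).2.2 with ⟨hlt, hf⟩ | ⟨hlt, hf⟩
    · -- x < i, fullf x i
      rcases hf with ⟨_, hi2⟩ | ⟨hi2, hsuf⟩ | ⟨hx2, _, _⟩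
      · -- cross : x ≤ r, r+1 ≤ i ≤ j
        exact Or.inl ⟨by omega, Or.inl ⟨hxr, by omega⟩⟩
      · -- suffix edge x < i ≤ r
        rcases le_or_gt j r with hjr2 | hjr2
        · rcases lt_trichotomy x j with h | h | h
          · exact Or.inl ⟨h, Or.inr (Or.inl ⟨hjr2,
              sufc_closure hsuf le_rfl hij hlt h⟩)⟩
          · omega
          · exact Or.inr ⟨h, Or.inr (Or.inl ⟨hxr,
              sufc_closure hsuf (by omega) (by omega) hlt h⟩)⟩
        · exact Or.inl ⟨by omega, Or.inl ⟨hxr, hjr2⟩⟩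
      · omega
    · -- i < x, fullf i x
      rcases hf with ⟨_, hx2⟩ | ⟨hx2, hsuf⟩ | ⟨hi2, _, _⟩
      · omega
      · -- suffix edge i < x ≤ r
        rcases le_or_gt j r with hjr2 | hjr2
        · rcases lt_trichotomy x j with h | h | h
          · exact Or.inl ⟨h, Or.inr (Or.inl ⟨hjr2,
              sufc_closure hsuf (by omega) (by omega) hlt h⟩)⟩
          · omega
          · exact Or.inr ⟨h, Or.inr (Or.inl ⟨hxr,
              sufc_closure hsuf (by omega) le_rfl hlt h⟩)⟩
        · exact Or.inl ⟨by omega, Or.inl ⟨hxr, hjr2⟩⟩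
      · omega
  · left
    intro i hi j hj hix hjx hij hJ
    rw [mem_Icc] at hi hj
    apply pr_mem_graphOf.mpr
    refine ⟨by simp; omega, by simp; omega, ?_⟩
    rcases (pr_mem_graphOf.mp hJ).2.2 with ⟨hlt, hf⟩ | ⟨hlt, hf⟩
    · -- x < j, fullf x j
      rcases hf with ⟨hx2, _⟩ | ⟨hj2, _⟩ | ⟨hx2, hj2, hpre⟩
      · omega
      · omega
      · -- prefix edge r+1 ≤ x < j ≤ n-1
        rcases le_or_gt i r with hir | hir
        · exact Or.inr ⟨by omega, Or.inl ⟨hir, by omega⟩⟩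
        · rcases lt_trichotomy i x with h | h | h
          · exact Or.inr ⟨h, Or.inr (Or.inr ⟨hir, by omega,
              prec_closure hpre (by omega) (by omega) hlt h⟩)⟩
          · omega
          · exact Or.inl ⟨h, Or.inr (Or.inr ⟨hxr, by omega,
              prec_closure hpre (by omega) hij hlt h⟩)⟩
    · -- j < x, fullf j x
      rcases hf with ⟨hj2, hx2⟩ | ⟨hx2, _⟩ | ⟨hj2, hx2, hpre⟩
      · -- cross: j ≤ r, r+1 ≤ x; i ≤ j ≤ r
        exact Or.inr ⟨by omega, Or.inl ⟨by omega, hx2⟩⟩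
      · omega
      · -- prefix edge r+1 ≤ j < x ≤ n-1
        rcases le_or_gt i r with hir | hir
        · exact Or.inr ⟨by omega, Or.inl ⟨hir, by omega⟩⟩
        · have hix2 : i < x := by omega
          exact Or.inr ⟨hix2, Or.inr (Or.inr ⟨hir, hx2,
            prec_closure hpre (by omega) (by omega) hlt hix2⟩)⟩
end sound

-- ===== contraction lemmas =====
lemma contr_eq_filter {n : ℕ} {J : Finset (Finset ℕ)} (hn : 1 ≤ n) (hJ : J ⊆ ksubsets n 2) :
    contr J n = ((Icc 1 (n-1)).filter (fun i => pr i n ∈ J)).image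
      (fun i => ({i} : Finset ℕ)) := by
  ext Y
  simp only [contr, mem_image, mem_filter]
  constructor
  · rintro ⟨X, hX, rfl⟩
    obtain ⟨hXJ, hnX⟩ := hX
    obtain ⟨x, hx, y, hy, hxy, rfl⟩ := mem_ksubsets_two.mp (hJ hXJ)
    rw [mem_Icc] at hx hy
    have hyn : y = n := by
      rcases mem_pr.mp hnX with rfl | rfl
      · omega
      · rfl
    subst hyn
    refine ⟨x, ⟨by rw [mem_Icc]; omega, hXJ⟩, ?_⟩
    rw [pr]
    rw [Finset.erase_insert_of_ne (by omega)]
    simp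
  · rintro ⟨i, ⟨hi, hiJ⟩, rfl⟩
    rw [mem_Icc] at hi
    refine ⟨pr i n, ⟨hiJ, mem_pr.mpr (Or.inr rfl)⟩, ?_⟩
    rw [pr, Finset.erase_insert_of_ne (by omega)]
    simp

lemma contr_eq_iff {n r : ℕ} {J : Finset (Finset ℕ)} (hn : 1 ≤ n) (hr : r ≤ n - 1)
    (hJ : J ⊆ ksubsets n 2) :
    contr J n = (Icc 1 r).image (fun i => ({i} : Finset ℕ)) ↔
      ∀ i, 1 ≤ i → i ≤ n - 1 → (pr i n ∈ J ↔ i ≤ r) := by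
  rw [contr_eq_filter hn hJ]
  constructor
  · intro h i h1 h2
    have := Finset.image_injective Finset.singleton_injective h
    constructor
    · intro hmem
      have : i ∈ Icc 1 r := by rw [← this]; exact mem_filter.mpr ⟨mem_Icc.mpr ⟨h1, h2⟩, hmem⟩
      exact (mem_Icc.mp this).2
    · intro hir
      have : i ∈ (Icc 1 (n-1)).filter (fun i => pr i n ∈ J) := by
        rw [this]; exact mem_Icc.mpr ⟨h1, hir⟩
      exact (mem_filter.mp this).2
  · intro h
    congr 1
    ext i
    rw [mem_filter, mem_Icc, mem_Icc]
    constructor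
    · rintro ⟨⟨h1, h2⟩, hmem⟩
      exact ⟨h1, (h i h1 h2).mp hmem⟩
    · rintro ⟨h1, h2⟩
      exact ⟨⟨h1, by omega⟩, (h i h1 (by omega)).mpr h2⟩

lemma contr_eq_iff' {n r : ℕ} {J : Finset (Finset ℕ)} (hn : 1 ≤ n) (hr : r ≤ n - 1)
    (hJ : J ⊆ ksubsets n 2) (h : ∀ i, 1 ≤ i → i ≤ n - 1 → (pr i n ∈ J ↔ i ≤ r)) :
    contr J n = (Icc 1 r).image (fun i => ({i} : Finset ℕ)) :=
  (contr_eq_iff hn hr hJ).mpr h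

lemma stair_pr_n {n r : ℕ} (hn : 3 ≤ n) (hr1 : 1 ≤ r) (hr2 : r ≤ n - 2) (T : Finset ℕ) :
    ∀ i, 1 ≤ i → i ≤ n - 1 → (pr i n ∈ stair n r T ↔ i ≤ r) := by
  intro i h1 h2
  unfold stair
  rw [pr_mem_graphOf]
  constructor
  · rintro ⟨_, _, ⟨_, hf, _⟩ | ⟨hlt, _⟩⟩
    · exact hf
    · omega
  · intro hir
    exact ⟨mem_Icc.mpr ⟨h1, by omega⟩, mem_Icc.mpr ⟨by omega, le_rfl⟩,
      Or.inl ⟨by omega, hir, Or.inl rfl⟩⟩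

lemma fullg_pr_n {n r : ℕ} (hn : 3 ≤ n) (hr1 : 1 ≤ r) (hr2 : r ≤ n - 2) (DA DB : Finset ℕ) :
    ∀ i, 1 ≤ i → i ≤ n - 1 → (pr i n ∈ fullg n r DA DB ↔ i ≤ r) := by
  intro i h1 h2
  unfold fullg
  rw [pr_mem_graphOf]
  constructor
  · rintro ⟨_, _, ⟨_, hf⟩ | ⟨hlt, _⟩⟩
    · rcases hf with ⟨h3, _⟩ | ⟨h3, _⟩ | ⟨_, h3, _⟩ <;> omega
    · omega
  · intro hir
    exact ⟨mem_Icc.mpr ⟨h1, by omega⟩, mem_Icc.mpr ⟨by omega, le_rfl⟩,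
      Or.inl ⟨by omega, Or.inl ⟨hir, by omega⟩⟩⟩

lemma downclosed_eq_Icc' {l u : ℕ} {D : Finset ℕ} (hl : 1 ≤ l) (hsub : D ⊆ Icc l u)
    (hdc : ∀ i j : ℕ, l ≤ i → i ≤ j → j ∈ D → i ∈ D) : D = Icc l (l - 1 + D.card) := by
  have hcard : D.card ≤ u + 1 - l := by
    have := card_le_card hsub; simpa [Nat.card_Icc] using this
  apply Finset.eq_of_subset_of_card_le
  · intro j hj
    rw [mem_Icc]
    have hjl : l ≤ j := (mem_Icc.mp (hsub hj)).1
    refine ⟨hjl, ?_⟩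
    by_contra hgt
    push_neg at hgt
    have hss : Icc l j ⊆ D := fun i hi => hdc i j (mem_Icc.mp hi).1 (mem_Icc.mp hi).2 hj
    have := card_le_card hss
    simp only [Nat.card_Icc] at this
    omega
  · simp only [Nat.card_Icc]
    omega

lemma graph_ext {n : ℕ} {J K : Finset (Finset ℕ)} (hJ : J ⊆ ksubsets n 2)
    (hK : K ⊆ ksubsets n 2)
    (h : ∀ x y, x ∈ Icc 1 n → y ∈ Icc 1 n → x < y → (pr x y ∈ J ↔ pr x y ∈ K)) :
    J = K := by
  ext X
  constructor
  · intro hX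
    obtain ⟨x, hx, y, hy, hxy, rfl⟩ := mem_ksubsets_two.mp (hJ hX)
    exact (h x y hx hy hxy).mp hX
  · intro hX
    obtain ⟨x, hx, y, hy, hxy, rfl⟩ := mem_ksubsets_two.mp (hK hX)
    exact (h x y hx hy hxy).mpr hX

lemma card_filter_image_antitone {r : ℕ} {g : ℕ → ℕ}
    (hg : ∀ a a' : ℕ, 1 ≤ a → a < a' → a' ≤ r → g a' < g a) {c a : ℕ}
    (ha1 : 1 ≤ a) (ha2 : a ≤ r) :
    (a ≤ (((Icc 1 r).image g).filter (fun t => c ≤ t)).card ↔ c ≤ g a) := by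
  classical
  have hinj : Set.InjOn g (Icc 1 r) := by
    intro x hx y hy hxy
    rw [coe_Icc, Set.mem_Icc] at hx hy
    by_contra hne
    rcases lt_or_gt_of_ne hne with h | h
    · exact absurd hxy (hg x y hx.1 h hy.2).ne'
    · exact absurd hxy (hg y x hy.1 h hx.2).ne
  have himg : ((Icc 1 r).image g).filter (fun t => c ≤ t) =
      ((Icc 1 r).filter (fun a' => c ≤ g a')).image g := by
    ext t
    simp only [mem_filter, mem_image]
    constructor
    · rintro ⟨⟨a', ha', rfl⟩, hc⟩
      exact ⟨a', ⟨ha', hc⟩, rfl⟩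
    · rintro ⟨a', ⟨ha', hc⟩, rfl⟩
      exact ⟨⟨a', ha', rfl⟩, hc⟩
  rw [himg, card_image_of_injOn (hinj.mono (by intro z hz; exact mem_coe.mpr (mem_of_mem_filter z hz)))]
  set D := (Icc 1 r).filter (fun a' => c ≤ g a') with hD
  have hdc : ∀ i j : ℕ, 1 ≤ i → i ≤ j → j ∈ D → i ∈ D := by
    intro i j h1 hij hjD
    rw [hD, mem_filter, mem_Icc] at hjD ⊢
    refine ⟨⟨h1, le_trans hij hjD.1.2⟩, ?_⟩
    rcases eq_or_lt_of_le hij with rfl | hlt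
    · exact hjD.2
    · exact le_trans hjD.2 (hg i j h1 hlt hjD.1.2).le
  have hIcc : D = Icc 1 D.card :=
    downclosed_eq_Icc (r := r) (fun t ht => mem_of_mem_filter t ht) hdc
  constructor
  · intro hle
    have haD : a ∈ D := by rw [hIcc, mem_Icc]; exact ⟨ha1, hle⟩
    exact (mem_filter.mp haD).2
  · intro hc
    have haD : a ∈ D := mem_filter.mpr ⟨mem_Icc.mpr ⟨ha1, ha2⟩, hc⟩
    rw [hIcc, mem_Icc] at haD
    exact haD.2

lemma hsymJ {J : Finset (Finset ℕ)} {x y : ℕ} : pr x y ∈ J ↔ pr y x ∈ J := by rw [pr_comm]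

theorem completeness {n r : ℕ} (hn : 3 ≤ n) (hr1 : 1 ≤ r) (hr2 : r ≤ n - 2)
    {J : Finset (Finset ℕ)} (hJsub : J ⊆ ksubsets n 2)
    (hud : ∀ x ∈ Icc 1 n, DownAt n J x ∨ UpAt n J x)
    (hcontr : ∀ i, 1 ≤ i → i ≤ n - 1 → (pr i n ∈ J ↔ i ≤ r)) :
    (∃ T ∈ (Icc 1 (n-1)).powersetCard r, J = stair n r T) ∨
    (∃ DA ∈ (Icc 1 (r-1)).powerset, ∃ DB ∈ (Icc 1 (n-1-r-1)).powerset,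
      (DA ≠ ∅ ∨ DB ≠ ∅) ∧ J = fullg n r DA DB) := by
  classical
  have hUpA : ∀ a, 1 ≤ a → a ≤ r → UpAt n J a := by
    intro a h1 h2
    rcases hud a (mem_Icc.mpr ⟨h1, by omega⟩) with hd | hu
    · intro i hi j hj hia hja hij hpra
      exact hd j hj n (mem_Icc.mpr ⟨by omega, le_rfl⟩) hja (by omega)
        (mem_Icc.mp hj).2 ((hcontr a h1 (by omega)).mpr h2)
    · exact hu
  have hDownB : ∀ b, r + 1 ≤ b → b ≤ n - 1 → DownAt n J b := by
    intro b h1 h2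
    rcases hud b (mem_Icc.mpr ⟨by omega, by omega⟩) with hd | hu
    · exact hd
    · intro i hi j hj hib hjb hij hprb
      exfalso
      have h3 : pr b n ∈ J := hu j hj n (mem_Icc.mpr ⟨by omega, le_rfl⟩) hjb (by omega)
        (mem_Icc.mp hj).2 hprb
      have := (hcontr b (by omega) h2).mp h3
      omega
  by_cases hint : ∃ x y, 1 ≤ x ∧ x < y ∧ ((y ≤ r) ∨ (r + 1 ≤ x ∧ y ≤ n - 1)) ∧ pr x y ∈ J
  · -- intra edge exists: full bipartite family
    right
    -- full bipartite
    have hfull : ∀ a y, 1 ≤ a → a ≤ r → r + 1 ≤ y → y ≤ n → pr a y ∈ J := by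
      obtain ⟨x, y, hx1, hxy, hcase, hpr⟩ := hint
      have key : ∀ a, 1 ≤ a → a ≤ r → pr a (r+1) ∈ J := by
        rcases hcase with hyr | ⟨hxr, hyn⟩
        · -- intra-A edge x < y ≤ r
          have hxr2 : pr x r ∈ J := by
            rcases eq_or_lt_of_le hyr with rfl | hlt
            · exact hpr
            · exact hUpA x hx1 (by omega) y (mem_Icc.mpr ⟨by omega, by omega⟩) r
                (mem_Icc.mpr ⟨by omega, by omega⟩) (by omega) (by omega) hyr hpr
          have hr2 : ∀ j, r + 1 ≤ j → j ≤ n → pr r j ∈ J :=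
            fun j hj1 hj2 => hUpA r (by omega) le_rfl x (mem_Icc.mpr ⟨hx1, by omega⟩) j
              (mem_Icc.mpr ⟨by omega, hj2⟩) (by omega) (by omega) (by omega)
              (hsymJ.mp hxr2)
          intro a h1 h2
          rcases eq_or_lt_of_le h2 with rfl | hlt
          · exact hr2 (a+1) le_rfl (by omega)
          · exact hsymJ.mp (hDownB (r+1) le_rfl (by omega) a
              (mem_Icc.mpr ⟨h1, by omega⟩) r (mem_Icc.mpr ⟨by omega, by omega⟩)
              (by omega) (by omega) h2 (hsymJ.mp (hr2 (r+1) le_rfl (by omega))))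
        · -- intra-B edge r+1 ≤ x < y ≤ n-1
          have hy1 : pr y (r+1) ∈ J := by
            rcases eq_or_lt_of_le hxr with rfl | hlt
            · exact hsymJ.mp hpr
            · exact hDownB y (by omega) hyn (r+1) (mem_Icc.mpr ⟨by omega, by omega⟩) x
                (mem_Icc.mpr ⟨by omega, by omega⟩) (by omega) (by omega) hlt.le
                (hsymJ.mp hpr)
          intro a h1 h2
          exact hsymJ.mp (hDownB (r+1) le_rfl (by omega) a (mem_Icc.mpr ⟨h1, by omega⟩) y
            (mem_Icc.mpr ⟨by omega, by omega⟩) (by omega) (by omega) (by omega)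
            (hsymJ.mp hy1))
      intro a y' h1 h2 h3 h4
      rcases eq_or_lt_of_le h3 with rfl | hlt
      · exact key a h1 h2
      · exact hUpA a h1 h2 (r+1) (mem_Icc.mpr ⟨by omega, by omega⟩) y'
          (mem_Icc.mpr ⟨by omega, h4⟩) (by omega) (by omega) (by omega) (key a h1 h2)
    -- A-side degrees
    set dA : ℕ → ℕ := fun a => ((Icc 1 (a-1)).filter (fun x => pr x a ∈ J)).card with hdA
    have hUA : ∀ a, 1 ≤ a → a ≤ r →
        (Icc 1 (a-1)).filter (fun x => pr x a ∈ J) = Icc (a - dA a) (a-1) := by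
      intro a h1 h2
      have := upclosed_eq_Icc (l := 1) (u := a - 1)
        (D := (Icc 1 (a-1)).filter (fun x => pr x a ∈ J)) le_rfl (filter_subset _ _) ?_
      · rw [this]
        congr 1
        have hbd := card_le_card (filter_subset (fun x => pr x a ∈ J) (Icc 1 (a-1)))
        simp only [Nat.card_Icc] at hbd
        simp only [hdA]
        omega
      · intro i j hij hj hi
        rw [mem_filter, mem_Icc] at hi ⊢
        refine ⟨⟨by omega, hj⟩, ?_⟩
        exact hsymJ.mp (hUpA a h1 h2 i (mem_Icc.mpr ⟨hi.1.1, by omega⟩) j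
          (mem_Icc.mpr ⟨by omega, by omega⟩) (by omega) (by omega) hij (hsymJ.mp hi.2))
    have hdAbd : ∀ a, 1 ≤ a → a ≤ r → dA a ≤ a - 1 := by
      intro a h1 h2
      have := card_le_card (filter_subset (fun x => pr x a ∈ J) (Icc 1 (a-1)))
      simp only [Nat.card_Icc] at this
      simp only [hdA]; omega
    have hgA : ∀ x a, 1 ≤ x → x < a → a ≤ r → (pr x a ∈ J ↔ a - dA a ≤ x) := by
      intro x a h1 h2 h3
      have hm : x ∈ (Icc 1 (a-1)).filter (fun z => pr z a ∈ J) ↔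
          x ∈ Icc (a - dA a) (a-1) := by rw [hUA a (by omega) h3]
      rw [mem_filter, mem_Icc, mem_Icc] at hm
      constructor
      · intro h; exact ((hm.mp ⟨⟨h1, by omega⟩, h⟩)).1
      · intro h; exact (hm.mpr ⟨h, by omega⟩).2
    have hstrictA : ∀ a a', 1 ≤ a → a < a' → a' ≤ r → 1 ≤ dA a → dA a < dA a' := by
      intro a a' h1 h2 h3 h4
      have hbd := hdAbd a h1 (by omega)
      have hx0 : pr (a - dA a) a ∈ J := (hgA (a - dA a) a (by omega) (by omega) (by omega)).mpr le_rfl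
      have hx0' : pr (a - dA a) a' ∈ J :=
        hUpA (a - dA a) (by omega) (by omega) a (mem_Icc.mpr ⟨by omega, by omega⟩) a'
          (mem_Icc.mpr ⟨by omega, by omega⟩) (by omega) (by omega) h2.le hx0
      have := (hgA (a - dA a) a' (by omega) (by omega) h3).mp hx0'
      omega
    -- B-side degrees
    set uB : ℕ → ℕ := fun b => ((Icc (b+1) (n-1)).filter (fun y => pr b y ∈ J)).card with huB
    have hUB : ∀ b, r + 1 ≤ b → b ≤ n - 1 →
        (Icc (b+1) (n-1)).filter (fun y => pr b y ∈ J) = Icc (b+1) (b + uB b) := by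
      intro b h1 h2
      have := downclosed_eq_Icc' (l := b+1) (u := n-1)
        (D := (Icc (b+1) (n-1)).filter (fun y => pr b y ∈ J)) (by omega) (filter_subset _ _) ?_
      · rw [this]
        congr 1
      · intro i j hij hj hjD
        rw [mem_filter, mem_Icc] at hjD ⊢
        refine ⟨⟨hij, by omega⟩, ?_⟩
        exact hDownB b h1 h2 i (mem_Icc.mpr ⟨by omega, by omega⟩) j
          (mem_Icc.mpr ⟨by omega, by omega⟩) (by omega) (by omega) hj hjD.2
    have huBbd : ∀ b, r + 1 ≤ b → b ≤ n - 1 → uB b ≤ n - 1 - b := by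
      intro b h1 h2
      have := card_le_card (filter_subset (fun y => pr b y ∈ J) (Icc (b+1) (n-1)))
      simp only [Nat.card_Icc] at this
      simp only [huB]; omega
    have hgB : ∀ b y, r + 1 ≤ b → b < y → y ≤ n - 1 → (pr b y ∈ J ↔ y ≤ b + uB b) := by
      intro b y h1 h2 h3
      have hm : y ∈ (Icc (b+1) (n-1)).filter (fun z => pr b z ∈ J) ↔
          y ∈ Icc (b+1) (b + uB b) := by rw [hUB b h1 (by omega)]
      rw [mem_filter, mem_Icc, mem_Icc] at hm
      constructor
      · intro h; exact ((hm.mp ⟨⟨by omega, h3⟩, h⟩)).2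
      · intro h; exact (hm.mpr ⟨by omega, h⟩).2
    have hstrictB : ∀ b b', r + 1 ≤ b → b < b' → b' ≤ n - 1 → 1 ≤ uB b' → uB b' < uB b := by
      intro b b' h1 h2 h3 h4
      have hbd := huBbd b' (by omega) h3
      have hy0 : pr b' (b' + uB b') ∈ J := (hgB b' (b' + uB b') (by omega) (by omega) (by omega)).mpr le_rfl
      have hy0' : pr b (b' + uB b') ∈ J :=
        hsymJ.mp (hDownB (b' + uB b') (by omega) (by omega) b
          (mem_Icc.mpr ⟨by omega, by omega⟩) b' (mem_Icc.mpr ⟨by omega, by omega⟩)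
          (by omega) (by omega) h2.le (hsymJ.mp hy0))
      have := (hgB b (b' + uB b') h1 (by omega) (by omega)).mp hy0'
      omega
    -- the code sets
    set DA : Finset ℕ := ((Icc 1 r).filter (fun a => 1 ≤ dA a)).image dA with hDA
    set DB : Finset ℕ := ((Icc (r+1) (n-1)).filter (fun b => 1 ≤ uB b)).image uB with hDB
    have hDAcard : ∀ c, 1 ≤ c →
        (DA.filter (fun t => c ≤ t)).card = ((Icc 1 r).filter (fun a => c ≤ dA a)).card := by
      intro c hc
      have himg : DA.filter (fun t => c ≤ t) = ((Icc 1 r).filter (fun a => c ≤ dA a)).image dA := by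
        rw [hDA]
        ext t
        simp only [mem_filter, mem_image]
        constructor
        · rintro ⟨⟨a, ⟨ha, _⟩, rfl⟩, h2⟩
          exact ⟨a, ⟨ha, h2⟩, rfl⟩
        · rintro ⟨a, ⟨ha, h2⟩, rfl⟩
          exact ⟨⟨a, ⟨ha, by omega⟩, rfl⟩, h2⟩
      rw [himg]
      apply card_image_of_injOn
      intro a ha a' ha' heq
      simp only [coe_filter, Set.mem_setOf_eq, mem_Icc] at ha ha'
      by_contra hne
      rcases lt_or_gt_of_ne hne with h | h
      · exact absurd heq (hstrictA a a' ha.1.1 h ha'.1.2 (by omega)).ne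
      · exact absurd heq (hstrictA a' a ha'.1.1 h ha.1.2 (by omega)).ne'
    have hDBcard : ∀ c, 1 ≤ c →
        (DB.filter (fun t => c ≤ t)).card =
          ((Icc (r+1) (n-1)).filter (fun b => c ≤ uB b)).card := by
      intro c hc
      have himg : DB.filter (fun t => c ≤ t) =
          ((Icc (r+1) (n-1)).filter (fun b => c ≤ uB b)).image uB := by
        rw [hDB]
        ext t
        simp only [mem_filter, mem_image]
        constructor
        · rintro ⟨⟨b, ⟨hb, _⟩, rfl⟩, h2⟩
          exact ⟨b, ⟨hb, h2⟩, rfl⟩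
        · rintro ⟨b, ⟨hb, h2⟩, rfl⟩
          exact ⟨⟨b, ⟨hb, by omega⟩, rfl⟩, h2⟩
      rw [himg]
      apply card_image_of_injOn
      intro b hb b' hb' heq
      simp only [coe_filter, Set.mem_setOf_eq, mem_Icc] at hb hb'
      by_contra hne
      rcases lt_or_gt_of_ne hne with h | h
      · exact absurd heq (hstrictB b b' hb.1.1 h hb'.1.2 (by omega)).ne'
      · exact absurd heq (hstrictB b' b hb'.1.1 h hb.1.2 (by omega)).ne
    -- sufc matches J on A
    have hsufc : ∀ x y, 1 ≤ x → x < y → y ≤ r → (sufc r DA x y ↔ pr x y ∈ J) := by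
      intro x y h1 h2 h3
      have hyr1 : 1 ≤ y := by omega
      have hc1 : 1 ≤ y - x := by omega
      obtain ⟨k, hk⟩ : ∃ k, ((Icc 1 r).filter (fun a => y - x ≤ dA a)).card = k := ⟨_, rfl⟩
      have hVup : (Icc 1 r).filter (fun a => y - x ≤ dA a) = Icc (r + 1 - k) r := by
        rw [← hk]
        apply upclosed_eq_Icc (l := 1) le_rfl (filter_subset _ _)
        intro i j hij hj hi
        rw [mem_filter, mem_Icc] at hi ⊢
        refine ⟨⟨by omega, hj⟩, ?_⟩
        rcases eq_or_lt_of_le hij with rfl | hlt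
        · exact hi.2
        · have := hstrictA i j hi.1.1 hlt hj (by omega)
          omega
      have hkr : k ≤ r := by
        rw [← hk]
        have := card_le_card (filter_subset (fun a => y - x ≤ dA a) (Icc 1 r))
        simpa using this
      have hymem : y ∈ (Icc 1 r).filter (fun a => y - x ≤ dA a) ↔ r + 1 - k ≤ y := by
        rw [hVup, mem_Icc]
        exact ⟨fun h => h.1, fun h => ⟨h, h3⟩⟩
      rw [mem_filter, mem_Icc] at hymem
      have hgy := hgA x y h1 h2 h3
      have hby := hdAbd y hyr1 h3
      unfold sufc
      rw [hDAcard (y - x) hc1, hk]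
      constructor
      · intro h
        have h5 : y - x ≤ dA y := (hymem.mpr (by omega)).2
        exact hgy.mpr (by omega)
      · intro h
        have h5 := hgy.mp h
        have h6 : r + 1 - k ≤ y := hymem.mp ⟨⟨hyr1, h3⟩, by omega⟩
        omega
    -- prec matches J on B
    have hprec : ∀ x y, r + 1 ≤ x → x < y → y ≤ n - 1 → (prec r DB x y ↔ pr x y ∈ J) := by
      intro x y h1 h2 h3
      have hc1 : 1 ≤ y - x := by omega
      obtain ⟨k, hk⟩ : ∃ k, ((Icc (r+1) (n-1)).filter (fun b => y - x ≤ uB b)).card = k := ⟨_, rfl⟩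
      have hVdown : (Icc (r+1) (n-1)).filter (fun b => y - x ≤ uB b) = Icc (r+1) (r + k) := by
        have h0 := downclosed_eq_Icc' (l := r+1) (u := n-1)
          (D := (Icc (r+1) (n-1)).filter (fun b => y - x ≤ uB b)) (by omega)
          (filter_subset _ _) ?_
        · rw [h0, hk]
          congr 1
        · intro i j hij hj hjD
          rw [mem_filter, mem_Icc] at hjD ⊢
          refine ⟨⟨hij, by omega⟩, ?_⟩
          rcases eq_or_lt_of_le hj with rfl | hlt
          · exact hjD.2
          · have := hstrictB i j hij hlt hjD.1.2 (by omega)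
            omega
      have hkb : k ≤ n - 1 - r := by
        rw [← hk]
        have := card_le_card (filter_subset (fun b => y - x ≤ uB b) (Icc (r+1) (n-1)))
        simp only [Nat.card_Icc] at this
        omega
      have hxmem : x ∈ (Icc (r+1) (n-1)).filter (fun b => y - x ≤ uB b) ↔ x ≤ r + k := by
        rw [hVdown, mem_Icc]
        exact ⟨fun h => h.2, fun h => ⟨h1, h⟩⟩
      rw [mem_filter, mem_Icc] at hxmem
      have hgx := hgB x y h1 h2 h3
      have hbx := huBbd x h1 (by omega)
      unfold prec
      rw [hDBcard (y - x) hc1, hk]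
      constructor
      · intro h
        have h5 : y - x ≤ uB x := (hxmem.mpr (by omega)).2
        exact hgx.mpr (by omega)
      · intro h
        have h5 := hgx.mp h
        have h6 : x ≤ r + k := hxmem.mp ⟨⟨h1, by omega⟩, by omega⟩
        omega
    refine ⟨DA, mem_powerset.mpr ?_, DB, mem_powerset.mpr ?_, ?_, ?_⟩
    · -- DA ⊆ Icc 1 (r-1)
      rw [hDA]
      intro t ht
      obtain ⟨a, ha, rfl⟩ := mem_image.mp ht
      rw [mem_filter, mem_Icc] at ha
      have := hdAbd a ha.1.1 ha.1.2
      rw [mem_Icc]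
      omega
    · -- DB ⊆ Icc 1 (n-1-r-1)
      rw [hDB]
      intro t ht
      obtain ⟨b, hb, rfl⟩ := mem_image.mp ht
      rw [mem_filter, mem_Icc] at hb
      have := huBbd b hb.1.1 hb.1.2
      rw [mem_Icc]
      omega
    · -- nonempty
      obtain ⟨x, y, hx1, hxy, hcase, hpr⟩ := hint
      rcases hcase with hyr | ⟨hxr, hyn⟩
      · left
        have : 1 ≤ dA y := by
          have := (hgA x y hx1 hxy hyr).mp hpr
          have := hdAbd y (by omega) hyr
          omega
        intro hemp
        have : y ∈ (Icc 1 r).filter (fun a => 1 ≤ dA a) :=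
          mem_filter.mpr ⟨mem_Icc.mpr ⟨by omega, hyr⟩, this⟩
        have : dA y ∈ DA := by rw [hDA]; exact mem_image_of_mem dA this
        rw [hemp] at this
        exact absurd this (notMem_empty _)
      · right
        have : 1 ≤ uB x := by
          have := (hgB x y hxr hxy hyn).mp hpr
          omega
        intro hemp
        have : x ∈ (Icc (r+1) (n-1)).filter (fun b => 1 ≤ uB b) :=
          mem_filter.mpr ⟨mem_Icc.mpr ⟨hxr, by omega⟩, this⟩
        have : uB x ∈ DB := by rw [hDB]; exact mem_image_of_mem uB this
        rw [hemp] at this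
        exact absurd this (notMem_empty _)
    · -- J = fullg
      apply graph_ext hJsub (by unfold fullg; exact graphOf_subset)
      intro x y hx hy hxy
      rw [mem_Icc] at hx hy
      rcases eq_or_lt_of_le hy.2 with rfl | hyn
      · rw [hcontr x hx.1 (by omega), fullg_pr_n hn hr1 hr2 DA DB x hx.1 (by omega)]
      · have hyn1 : y ≤ n - 1 := by omega
        unfold fullg
        rw [pr_mem_graphOf]
        rcases le_or_gt y r with hyr | hyr
        · -- intra A
          rw [← hsufc x y hx.1 hxy hyr]
          constructor
          · intro h
            exact ⟨mem_Icc.mpr hx, mem_Icc.mpr hy, Or.inl ⟨hxy,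
              Or.inr (Or.inl ⟨hyr, h⟩)⟩⟩
          · rintro ⟨_, _, ⟨_, hf⟩ | ⟨hlt, _⟩⟩
            · rcases hf with ⟨_, h2⟩ | ⟨_, h2⟩ | ⟨h2, _, _⟩
              · omega
              · exact h2
              · omega
            · omega
        · rcases le_or_gt x r with hxr | hxr
          · -- cross
            constructor
            · intro _
              exact ⟨mem_Icc.mpr hx, mem_Icc.mpr hy, Or.inl ⟨hxy, Or.inl ⟨hxr, hyr⟩⟩⟩
            · intro _
              exact hfull x y hx.1 hxr hyr (by omega)
          · -- intra B
            rw [← hprec x y hxr hxy hyn1]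
            constructor
            · intro h
              exact ⟨mem_Icc.mpr hx, mem_Icc.mpr hy, Or.inl ⟨hxy,
                Or.inr (Or.inr ⟨hxr, hyn1, h⟩)⟩⟩
            · rintro ⟨_, _, ⟨_, hf⟩ | ⟨hlt, _⟩⟩
              · rcases hf with ⟨h2, _⟩ | ⟨h2, _⟩ | ⟨_, _, h2⟩
                · omega
                · omega
                · exact h2
              · omega
  · -- no intra edge: staircase family
    left
    push_neg at hint
    have hnointra : ∀ x y, 1 ≤ x → x < y →
        ((y ≤ r) ∨ (r + 1 ≤ x ∧ y ≤ n - 1)) → pr x y ∉ J := hint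
    set sa : ℕ → ℕ := fun a => ((Icc (r+1) (n-1)).filter (fun b => pr a b ∈ J)).card with hsa
    have hsabd : ∀ a, sa a ≤ n - 1 - r := by
      intro a
      have := card_le_card (filter_subset (fun b => pr a b ∈ J) (Icc (r+1) (n-1)))
      simp only [Nat.card_Icc] at this
      simp only [hsa]; omega
    have hNa : ∀ a, 1 ≤ a → a ≤ r →
        (Icc (r+1) (n-1)).filter (fun b => pr a b ∈ J) = Icc (n - sa a) (n-1) := by
      intro a h1 h2
      have := upclosed_eq_Icc (l := r+1) (u := n-1)
        (D := (Icc (r+1) (n-1)).filter (fun b => pr a b ∈ J)) (by omega) (filter_subset _ _) ?_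
      · rw [this]
        congr 1
        have h5 := hsabd a
        simp only [hsa] at h5 ⊢
        omega
      · intro i j hij hj hi
        rw [mem_filter, mem_Icc] at hi ⊢
        refine ⟨⟨by omega, hj⟩, ?_⟩
        exact hUpA a h1 h2 i (mem_Icc.mpr ⟨by omega, by omega⟩) j
          (mem_Icc.mpr ⟨by omega, by omega⟩) (by omega) (by omega) hij hi.2
    have hf1 : ∀ a b, 1 ≤ a → a ≤ r → r + 1 ≤ b → b ≤ n - 1 →
        (pr a b ∈ J ↔ n - sa a ≤ b) := by
      intro a b h1 h2 h3 h4
      have hm : b ∈ (Icc (r+1) (n-1)).filter (fun z => pr a z ∈ J) ↔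
          b ∈ Icc (n - sa a) (n-1) := by rw [hNa a h1 h2]
      rw [mem_filter, mem_Icc, mem_Icc] at hm
      constructor
      · intro h; exact (hm.mp ⟨⟨h3, h4⟩, h⟩).1
      · intro h; exact (hm.mpr ⟨h, h4⟩).2
    have hanti : ∀ a a', 1 ≤ a → a ≤ a' → a' ≤ r → sa a' ≤ sa a := by
      intro a a' h1 h2 h3
      rw [hsa]
      apply card_le_card
      intro b hb
      rw [mem_filter, mem_Icc] at hb ⊢
      refine ⟨hb.1, ?_⟩
      exact hsymJ.mp (hDownB b hb.1.1 hb.1.2 a (mem_Icc.mpr ⟨h1, by omega⟩) a'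
        (mem_Icc.mpr ⟨by omega, by omega⟩) (by omega) (by omega) h2 (hsymJ.mp hb.2))
    set g : ℕ → ℕ := fun a => sa a + (r - a) + 1 with hg
    have hgs : ∀ a a' : ℕ, 1 ≤ a → a < a' → a' ≤ r → g a' < g a := by
      intro a a' h1 h2 h3
      have := hanti a a' h1 h2.le h3
      rw [hg]
      simp only
      omega
    refine ⟨(Icc 1 r).image g, ?_, ?_⟩
    · rw [mem_powersetCard]
      constructor
      · intro t ht
        obtain ⟨a, ha, rfl⟩ := mem_image.mp ht
        rw [mem_Icc] at ha
        have := hsabd a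
        rw [mem_Icc, hg]
        simp only
        omega
      · have hinj : Set.InjOn g (Icc 1 r) := by
          intro a ha a' ha' heq
          rw [coe_Icc, Set.mem_Icc] at ha ha'
          by_contra hne
          rcases lt_or_gt_of_ne hne with h | h
          · exact absurd heq (hgs a a' ha.1 h ha'.2).ne'
          · exact absurd heq (hgs a' a ha'.1 h ha.2).ne
        rw [card_image_of_injOn hinj, Nat.card_Icc]
        omega
    · apply graph_ext hJsub (by unfold stair; exact graphOf_subset)
      intro x y hx hy hxy
      rw [mem_Icc] at hx hy
      rcases eq_or_lt_of_le hy.2 with rfl | hyn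
      · rw [hcontr x hx.1 (by omega),
          stair_pr_n hn hr1 hr2 ((Icc 1 r).image g) x hx.1 (by omega)]
      · have hyn1 : y ≤ n - 1 := by omega
        unfold stair
        rw [pr_mem_graphOf]
        rcases le_or_gt y r with hyr | hyr
        · -- intra A : both false
          constructor
          · intro h; exact absurd h (hnointra x y hx.1 hxy (Or.inl hyr))
          · rintro ⟨_, _, ⟨_, _, hf⟩ | ⟨hlt, _⟩⟩
            · rcases hf with rfl | ⟨h2, _, _⟩ <;> omega
            · omega
        · rcases le_or_gt x r with hxr | hxr
          · -- cross
            have hsc : scond n r ((Icc 1 r).image g) x y ↔ n - sa x ≤ y := by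
              unfold scond
              rw [card_filter_image_antitone hgs hx.1 hxr]
              have := hsabd x
              rw [hg]
              simp only
              omega
            rw [hf1 x y hx.1 hxr (by omega) hyn1]
            constructor
            · intro h
              exact ⟨mem_Icc.mpr hx, mem_Icc.mpr hy, Or.inl ⟨hxy,
                hxr, Or.inr ⟨by omega, hyn1, hsc.mpr h⟩⟩⟩
            · rintro ⟨_, _, ⟨_, _, hf⟩ | ⟨hlt, _⟩⟩
              · rcases hf with rfl | ⟨_, _, h3⟩
                · omega
                · exact hsc.mp h3
              · omega
          · -- intra B : both false
            constructor
            · intro h; exact absurd h (hnointra x y hx.1 hxy (Or.inr ⟨hxr, hyn1⟩))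
            · rintro ⟨_, _, ⟨_, h2, _⟩ | ⟨hlt, _⟩⟩ <;> omega

lemma count_mem (T : Finset ℕ) (x : ℕ) :
    (T.filter (fun t => x ≤ t)).card =
      (T.filter (fun t => x + 1 ≤ t)).card + (if x ∈ T then 1 else 0) := by
  classical
  have hsplit : T.filter (fun t => x ≤ t) =
      (T.filter (fun t => x + 1 ≤ t)) ∪ (T.filter (fun t => t = x)) := by
    ext t
    simp only [mem_filter, mem_union]
    constructor
    · rintro ⟨ht, hx⟩
      rcases eq_or_lt_of_le hx with rfl | h
      · exact Or.inr ⟨ht, rfl⟩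
      · exact Or.inl ⟨ht, h⟩
    · rintro (⟨ht, hx⟩ | ⟨ht, rfl⟩)
      · exact ⟨ht, by omega⟩
      · exact ⟨ht, le_rfl⟩
  have hdisj : Disjoint (T.filter (fun t => x + 1 ≤ t)) (T.filter (fun t => t = x)) := by
    rw [Finset.disjoint_left]
    intro a ha hb
    rw [mem_filter] at ha hb
    omega
  rw [hsplit, card_union_of_disjoint hdisj]
  congr 1
  rw [Finset.filter_eq']
  split <;> simp

/-- two finsets with equal "count above v" functions are equal -/
lemma eq_of_counts {T T' : Finset ℕ}
    (h : ∀ v, (T.filter (fun t => v ≤ t)).card = (T'.filter (fun t => v ≤ t)).card) :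
    T = T' := by
  ext x
  have h1 := count_mem T x
  have h2 := count_mem T' x
  rw [h x, h (x+1)] at h1
  rw [h1] at h2
  by_cases hx : x ∈ T <;> by_cases hx' : x ∈ T' <;> simp [hx, hx'] at h2 ⊢ <;> tauto

lemma stair_injOn {n r : ℕ} (hn : 3 ≤ n) (hr1 : 1 ≤ r) (hr2 : r ≤ n - 2)
    {T T' : Finset ℕ} (hT : T ∈ (Icc 1 (n-1)).powersetCard r)
    (hT' : T' ∈ (Icc 1 (n-1)).powersetCard r)
    (heq : stair n r T = stair n r T') : T = T' := by
  rw [mem_powersetCard] at hT hT'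
  -- the scond data agree
  have hiff : ∀ a b, 1 ≤ a → a ≤ r → r + 1 ≤ b → b ≤ n - 1 →
      (scond n r T a b ↔ scond n r T' a b) := by
    have key : ∀ (U U' : Finset ℕ), stair n r U = stair n r U' →
        ∀ a b, 1 ≤ a → a ≤ r → r + 1 ≤ b → b ≤ n - 1 →
        scond n r U a b → scond n r U' a b := by
      intro U U' hUU a b h1 h2 h3 h4 hsc
      have hmem : pr a b ∈ stair n r U := by
        unfold stair
        exact pr_mem_graphOf.mpr ⟨mem_Icc.mpr ⟨h1, by omega⟩, mem_Icc.mpr ⟨by omega, by omega⟩,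
          Or.inl ⟨by omega, h2, Or.inr ⟨h3, h4, hsc⟩⟩⟩
      rw [hUU] at hmem
      unfold stair at hmem
      rcases (pr_mem_graphOf.mp hmem).2.2 with ⟨_, _, hf⟩ | ⟨hlt, _⟩
      · rcases hf with rfl | ⟨_, _, h5⟩
        · omega
        · exact h5
      · omega
    exact fun a b h1 h2 h3 h4 =>
      ⟨key T T' heq a b h1 h2 h3 h4, key T' T heq.symm a b h1 h2 h3 h4⟩
  -- counts agree
  apply eq_of_counts
  have hbound : ∀ (U : Finset ℕ), U ⊆ Icc 1 (n-1) → U.card = r → ∀ v, 2 ≤ v → v ≤ n - 1 →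
      r ≤ (U.filter (fun t => v ≤ t)).card + (v - 1) ∧
      (U.filter (fun t => v ≤ t)).card + v ≤ n := by
    intro U hU hUc v hv1 hv2
    constructor
    · have hsp := Finset.card_filter_add_card_filter_not
        (s := U) (p := fun t => v ≤ t)
      have hlow : (U.filter (fun t => ¬ v ≤ t)).card ≤ v - 1 := by
        have hss : U.filter (fun t => ¬ v ≤ t) ⊆ Icc 1 (v-1) := by
          intro t ht
          rw [mem_filter] at ht
          have := mem_Icc.mp (hU ht.1)
          rw [mem_Icc]
          omega
        have := card_le_card hss
        simpa [Nat.card_Icc] using this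
      omega
    · have hss : U.filter (fun t => v ≤ t) ⊆ Icc v (n-1) := by
        intro t ht
        rw [mem_filter] at ht
        have := mem_Icc.mp (hU ht.1)
        rw [mem_Icc]
        omega
      have := card_le_card hss
      simp only [Nat.card_Icc] at this
      omega
  have hcnt : ∀ v, 2 ≤ v → v ≤ n - 1 →
      (T.filter (fun t => v ≤ t)).card = (T'.filter (fun t => v ≤ t)).card := by
    have key2 : ∀ (U U' : Finset ℕ), U ⊆ Icc 1 (n-1) → U.card = r → U' ⊆ Icc 1 (n-1) →
        U'.card = r →
        (∀ a b, 1 ≤ a → a ≤ r → r + 1 ≤ b → b ≤ n - 1 →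
          (scond n r U a b → scond n r U' a b)) →
        ∀ v, 2 ≤ v → v ≤ n - 1 →
        (U.filter (fun t => v ≤ t)).card ≤ (U'.filter (fun t => v ≤ t)).card := by
      intro U U' hU hUc hU2 hUc2 hif v hv1 hv2
      by_contra hgt
      push_neg at hgt
      obtain ⟨hb1, hb2⟩ := hbound U hU hUc v hv1 hv2
      obtain ⟨hb3, hb4⟩ := hbound U' hU2 hUc2 v hv1 hv2
      have hcr : (U.filter (fun t => v ≤ t)).card ≤ r := by
        have := card_le_card (filter_subset (fun t => v ≤ t) U)
        omega
      set a := (U'.filter (fun t => v ≤ t)).card + 1 with ha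
      set b := n + r + 1 - a - v with hb
      have hc : n + r + 1 - a - b = v := by omega
      have h5 : scond n r U a b := by
        unfold scond
        rw [hc]
        omega
      have h6 := hif a b (by omega) (by omega) (by omega) (by omega) h5
      unfold scond at h6
      rw [hc] at h6
      omega
    intro v hv1 hv2
    have h1 := key2 T T' hT.1 hT.2 hT'.1 hT'.2
      (fun a b c d e f => (hiff a b c d e f).mp) v hv1 hv2
    have h2 := key2 T' T hT'.1 hT'.2 hT.1 hT.2
      (fun a b c d e f => (hiff a b c d e f).mpr) v hv1 hv2
    omega
  intro v
  rcases le_or_gt v 1 with hv | hv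
  · -- all elements count
    have hall : ∀ (U : Finset ℕ), U ⊆ Icc 1 (n-1) → U.filter (fun t => v ≤ t) = U := by
      intro U hU
      apply filter_true_of_mem
      intro t ht
      have := mem_Icc.mp (hU ht)
      omega
    rw [hall T hT.1, hall T' hT'.1, hT.2, hT'.2]
  · rcases le_or_gt v (n-1) with hv2 | hv2
    · exact hcnt v (by omega) hv2
    · have hnone : ∀ (U : Finset ℕ), U ⊆ Icc 1 (n-1) → U.filter (fun t => v ≤ t) = ∅ := by
        intro U hU
        apply filter_false_of_mem
        intro t ht
        have := mem_Icc.mp (hU ht)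
        omega
      rw [hnone T hT.1, hnone T' hT'.1]

lemma fullg_sufc_iff {n r : ℕ} (hn : 3 ≤ n) (hr2 : r ≤ n - 2) {DA DB : Finset ℕ}
    {x y : ℕ} (h1 : 1 ≤ x) (h2 : x < y) (h3 : y ≤ r) :
    (pr x y ∈ fullg n r DA DB ↔ sufc r DA x y) := by
  unfold fullg
  rw [pr_mem_graphOf]
  constructor
  · rintro ⟨_, _, ⟨_, hf⟩ | ⟨hlt, _⟩⟩
    · rcases hf with ⟨_, h4⟩ | ⟨_, h4⟩ | ⟨h4, _, _⟩
      · omega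
      · exact h4
      · omega
    · omega
  · intro h
    exact ⟨mem_Icc.mpr ⟨h1, by omega⟩, mem_Icc.mpr ⟨by omega, by omega⟩,
      Or.inl ⟨h2, Or.inr (Or.inl ⟨h3, h⟩)⟩⟩

lemma fullg_prec_iff {n r : ℕ} (hn : 3 ≤ n) {DA DB : Finset ℕ}
    {x y : ℕ} (h1 : r + 1 ≤ x) (h2 : x < y) (h3 : y ≤ n - 1) :
    (pr x y ∈ fullg n r DA DB ↔ prec r DB x y) := by
  unfold fullg
  rw [pr_mem_graphOf]
  constructor
  · rintro ⟨_, _, ⟨_, hf⟩ | ⟨hlt, _⟩⟩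
    · rcases hf with ⟨h4, _⟩ | ⟨h4, _⟩ | ⟨_, _, h4⟩
      · omega
      · omega
      · exact h4
    · omega
  · intro h
    exact ⟨mem_Icc.mpr ⟨by omega, by omega⟩, mem_Icc.mpr ⟨by omega, by omega⟩,
      Or.inl ⟨h2, Or.inr (Or.inr ⟨h1, h3, h⟩)⟩⟩

lemma fullg_injOn {n r : ℕ} (hn : 3 ≤ n) (hr1 : 1 ≤ r) (hr2 : r ≤ n - 2)
    {DA DB DA' DB' : Finset ℕ} (hA : DA ⊆ Icc 1 (r-1)) (hB : DB ⊆ Icc 1 (n-1-r-1))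
    (hA' : DA' ⊆ Icc 1 (r-1)) (hB' : DB' ⊆ Icc 1 (n-1-r-1))
    (heq : fullg n r DA DB = fullg n r DA' DB') : DA = DA' ∧ DB = DB' := by
  constructor
  · -- DA = DA'
    apply eq_of_counts
    have key : ∀ (U U' : Finset ℕ), U ⊆ Icc 1 (r-1) → U' ⊆ Icc 1 (r-1) →
        (∀ x y, 1 ≤ x → x < y → y ≤ r → (sufc r U x y → sufc r U' x y)) →
        ∀ c, 1 ≤ c → c ≤ r - 1 →
        (U.filter (fun t => c ≤ t)).card ≤ (U'.filter (fun t => c ≤ t)).card := by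
      intro U U' hU hU' hif c h1 h2
      by_contra hgt
      push_neg at hgt
      have hbd : ∀ (W : Finset ℕ), W ⊆ Icc 1 (r-1) →
          (W.filter (fun t => c ≤ t)).card ≤ r - c := by
        intro W hW
        have hss : W.filter (fun t => c ≤ t) ⊆ Icc c (r-1) := by
          intro t ht
          rw [mem_filter] at ht
          have := mem_Icc.mp (hW ht.1)
          rw [mem_Icc]
          omega
        have := card_le_card hss
        simp only [Nat.card_Icc] at this
        omega
      have hb1 := hbd U hU
      have hb2 := hbd U' hU'
      set k := (U'.filter (fun t => c ≤ t)).card + 1 with hk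
      set y := r + 1 - k with hy
      set x := y - c with hx
      have hyx : y - x = c := by omega
      have h5 : sufc r U x y := by
        unfold sufc
        rw [hyx]
        omega
      have h6 := hif x y (by omega) (by omega) (by omega) h5
      unfold sufc at h6
      rw [hyx] at h6
      omega
    have hif1 : ∀ x y, 1 ≤ x → x < y → y ≤ r → (sufc r DA x y ↔ sufc r DA' x y) := by
      intro x y h1 h2 h3
      rw [← fullg_sufc_iff (DB := DB) hn hr2 h1 h2 h3,
        ← fullg_sufc_iff (DB := DB') hn hr2 h1 h2 h3, heq]
    intro v
    rcases le_or_gt v 0 with hv | hv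
    · have hz : v = 0 := by omega
      subst hz
      have hall : ∀ (W : Finset ℕ), W.filter (fun t => (0:ℕ) ≤ t) = W := by
        intro W
        apply filter_true_of_mem
        intro t _
        omega
      rw [hall, hall]
      have h1 := key DA DA' hA hA' (fun x y a b c => (hif1 x y a b c).mp)
      have h2 := key DA' DA hA' hA (fun x y a b c => (hif1 x y a b c).mpr)
      -- card equality at c = 1 gives full card equality
      have e1 : DA.filter (fun t => 1 ≤ t) = DA := by
        apply filter_true_of_mem
        intro t ht
        exact (mem_Icc.mp (hA ht)).1
      have e2 : DA'.filter (fun t => 1 ≤ t) = DA' := by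
        apply filter_true_of_mem
        intro t ht
        exact (mem_Icc.mp (hA' ht)).1
      rcases le_or_gt 1 (r-1) with hr' | hr'
      · have := h1 1 le_rfl hr'
        have := h2 1 le_rfl hr'
        rw [e1, e2] at *
        omega
      · -- r = 1 : both empty
        have : DA = ∅ := by
          rw [← Finset.subset_empty]
          intro t ht
          have := mem_Icc.mp (hA ht)
          omega
        have : DA' = ∅ := by
          rw [← Finset.subset_empty]
          intro t ht
          have := mem_Icc.mp (hA' ht)
          omega
        simp_all
    · rcases le_or_gt v (r-1) with hv2 | hv2
      · have h1 := key DA DA' hA hA' (fun x y a b c => (hif1 x y a b c).mp) v hv hv2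
        have h2 := key DA' DA hA' hA (fun x y a b c => (hif1 x y a b c).mpr) v hv hv2
        omega
      · have hnone : ∀ (W : Finset ℕ), W ⊆ Icc 1 (r-1) → W.filter (fun t => v ≤ t) = ∅ := by
          intro W hW
          apply filter_false_of_mem
          intro t ht
          have := mem_Icc.mp (hW ht)
          omega
        rw [hnone DA hA, hnone DA' hA']
  · -- DB = DB'
    apply eq_of_counts
    have key : ∀ (U U' : Finset ℕ), U ⊆ Icc 1 (n-1-r-1) → U' ⊆ Icc 1 (n-1-r-1) →
        (∀ x y, r + 1 ≤ x → x < y → y ≤ n - 1 → (prec r U x y → prec r U' x y)) →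
        ∀ c, 1 ≤ c → c ≤ n - 1 - r - 1 →
        (U.filter (fun t => c ≤ t)).card ≤ (U'.filter (fun t => c ≤ t)).card := by
      intro U U' hU hU' hif c h1 h2
      by_contra hgt
      push_neg at hgt
      have hbd : ∀ (W : Finset ℕ), W ⊆ Icc 1 (n-1-r-1) →
          (W.filter (fun t => c ≤ t)).card ≤ n - 1 - r - c := by
        intro W hW
        have hss : W.filter (fun t => c ≤ t) ⊆ Icc c (n-1-r-1) := by
          intro t ht
          rw [mem_filter] at ht
          have := mem_Icc.mp (hW ht.1)
          rw [mem_Icc]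
          omega
        have := card_le_card hss
        simp only [Nat.card_Icc] at this
        omega
      have hb1 := hbd U hU
      have hb2 := hbd U' hU'
      set k := (U'.filter (fun t => c ≤ t)).card + 1 with hk
      set x := r + k with hx
      set y := x + c with hy
      have hyx : y - x = c := by omega
      have h5 : prec r U x y := by
        unfold prec
        rw [hyx]
        omega
      have h6 := hif x y (by omega) (by omega) (by omega) h5
      unfold prec at h6
      rw [hyx] at h6
      omega
    have hif1 : ∀ x y, r + 1 ≤ x → x < y → y ≤ n - 1 → (prec r DB x y ↔ prec r DB' x y) := by
      intro x y h1 h2 h3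
      rw [← fullg_prec_iff (DA := DA) hn h1 h2 h3,
        ← fullg_prec_iff (DA := DA') hn h1 h2 h3, heq]
    intro v
    rcases le_or_gt v 0 with hv | hv
    · have hz : v = 0 := by omega
      subst hz
      have hall : ∀ (W : Finset ℕ), W.filter (fun t => (0:ℕ) ≤ t) = W := by
        intro W
        apply filter_true_of_mem
        intro t _
        omega
      rw [hall, hall]
      have e1 : DB.filter (fun t => 1 ≤ t) = DB := by
        apply filter_true_of_mem
        intro t ht
        exact (mem_Icc.mp (hB ht)).1
      have e2 : DB'.filter (fun t => 1 ≤ t) = DB' := by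
        apply filter_true_of_mem
        intro t ht
        exact (mem_Icc.mp (hB' ht)).1
      rcases le_or_gt 1 (n-1-r-1) with hr' | hr'
      · have := key DB DB' hB hB' (fun x y a b c => (hif1 x y a b c).mp) 1 le_rfl hr'
        have := key DB' DB hB' hB (fun x y a b c => (hif1 x y a b c).mpr) 1 le_rfl hr'
        rw [e1, e2] at *
        omega
      · have : DB = ∅ := by
          rw [← Finset.subset_empty]
          intro t ht
          have := mem_Icc.mp (hB ht)
          omega
        have : DB' = ∅ := by
          rw [← Finset.subset_empty]
          intro t ht
          have := mem_Icc.mp (hB' ht)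
          omega
        simp_all
    · rcases le_or_gt v (n-1-r-1) with hv2 | hv2
      · have h1 := key DB DB' hB hB' (fun x y a b c => (hif1 x y a b c).mp) v hv hv2
        have h2 := key DB' DB hB' hB (fun x y a b c => (hif1 x y a b c).mpr) v hv hv2
        omega
      · have hnone : ∀ (W : Finset ℕ), W ⊆ Icc 1 (n-1-r-1) → W.filter (fun t => v ≤ t) = ∅ := by
          intro W hW
          apply filter_false_of_mem
          intro t ht
          have := mem_Icc.mp (hW ht)
          omega
        rw [hnone DB hB, hnone DB' hB']

lemma fullg_ne_stair {n r : ℕ} (hn : 3 ≤ n) (hr1 : 1 ≤ r) (hr2 : r ≤ n - 2)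
    {DA DB : Finset ℕ} (hA : DA ⊆ Icc 1 (r-1)) (hB : DB ⊆ Icc 1 (n-1-r-1))
    (hne : DA ≠ ∅ ∨ DB ≠ ∅) (T : Finset ℕ) : fullg n r DA DB ≠ stair n r T := by
  intro heq
  rcases hne with hA0 | hB0
  · obtain ⟨t, ht⟩ := Finset.nonempty_iff_ne_empty.mpr hA0
    have htb := mem_Icc.mp (hA ht)
    have hmem : pr (r - t) r ∈ fullg n r DA DB := by
      apply (fullg_sufc_iff hn hr2 (by omega) (by omega) le_rfl).mpr
      unfold sufc
      have : t ∈ DA.filter (fun s => r - (r - t) ≤ s) := by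
        rw [mem_filter]
        exact ⟨ht, by omega⟩
      have := Finset.card_pos.mpr ⟨t, this⟩
      omega
    rw [heq] at hmem
    unfold stair at hmem
    rcases (pr_mem_graphOf.mp hmem).2.2 with ⟨hlt, h4, hf⟩ | ⟨hlt, _⟩
    · rcases hf with h5 | ⟨h5, _, _⟩ <;> omega
    · omega
  · obtain ⟨t, ht⟩ := Finset.nonempty_iff_ne_empty.mpr hB0
    have htb := mem_Icc.mp (hB ht)
    have hmem : pr (r+1) (r+1+t) ∈ fullg n r DA DB := by
      apply (fullg_prec_iff hn le_rfl (by omega) (by omega)).mpr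
      unfold prec
      have : t ∈ DB.filter (fun s => r+1+t - (r+1) ≤ s) := by
        rw [mem_filter]
        exact ⟨ht, by omega⟩
      have := Finset.card_pos.mpr ⟨t, this⟩
      omega
    rw [heq] at hmem
    unfold stair at hmem
    rcases (pr_mem_graphOf.mp hmem).2.2 with ⟨hlt, h4, hf⟩ | ⟨hlt, _⟩
    · rcases hf with h5 | ⟨h5, _, _⟩ <;> omega
    · omega

lemma contr_eq_iff2 {n r : ℕ} {J : Finset (Finset ℕ)} (hn : 1 ≤ n)
    (hJ : J ⊆ ksubsets n 2) :
    contr J n = (Icc (r+1) (n-1)).image (fun i => ({i} : Finset ℕ)) ↔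
      ∀ i, 1 ≤ i → i ≤ n - 1 → (pr i n ∈ J ↔ r + 1 ≤ i) := by
  rw [contr_eq_filter hn hJ]
  constructor
  · intro h i h1 h2
    have heq := Finset.image_injective Finset.singleton_injective h
    constructor
    · intro hmem
      have : i ∈ Icc (r+1) (n-1) := by
        rw [← heq]; exact mem_filter.mpr ⟨mem_Icc.mpr ⟨h1, h2⟩, hmem⟩
      exact (mem_Icc.mp this).1
    · intro hir
      have : i ∈ (Icc 1 (n-1)).filter (fun i => pr i n ∈ J) := by
        rw [heq]; exact mem_Icc.mpr ⟨hir, h2⟩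
      exact (mem_filter.mp this).2
  · intro h
    congr 1
    ext i
    rw [mem_filter, mem_Icc, mem_Icc]
    constructor
    · rintro ⟨⟨h1, h2⟩, hmem⟩
      exact ⟨(h i h1 h2).mp hmem, h2⟩
    · rintro ⟨h1, h2⟩
      exact ⟨⟨by omega, h2⟩, (h i (by omega) h2).mpr h1⟩

theorem count1 {n r : ℕ} (hn : 3 ≤ n) (hr1 : 1 ≤ r) (hr2 : r ≤ n - 2) :
    Nat.card {J : Finset (Finset ℕ) // CoConsistent n 2 J ∧
        contr J n = (Finset.Icc 1 r).image (fun i => ({i} : Finset ℕ))} =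
      2 ^ (n - 3) + Nat.choose (n - 1) r - 1 := by
  classical
  set S1 := ((Icc 1 (n-1)).powersetCard r).image (stair n r) with hS1
  set S2 := ((((Icc 1 (r-1)).powerset ×ˢ (Icc 1 (n-1-r-1)).powerset).filter
      (fun p => p ≠ (∅, ∅))).image (fun p => fullg n r p.1 p.2)) with hS2
  have hiff : ∀ J : Finset (Finset ℕ), (CoConsistent n 2 J ∧
      contr J n = (Icc 1 r).image (fun i => ({i} : Finset ℕ))) ↔ J ∈ S1 ∪ S2 := by
    intro J
    constructor
    · rintro ⟨hco, hcon⟩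
      obtain ⟨hsub, hud⟩ := (coconsistent_two_iff J).mp hco
      have hcontr := (contr_eq_iff (by omega) (by omega) hsub).mp hcon
      rcases completeness hn hr1 hr2 hsub hud hcontr with
        ⟨T, hT, rfl⟩ | ⟨DA, hDA, DB, hDB, hne, rfl⟩
      · exact mem_union_left _ (mem_image_of_mem _ hT)
      · apply mem_union_right
        rw [hS2]
        refine mem_image.mpr ⟨(DA, DB), mem_filter.mpr ⟨mem_product.mpr ⟨hDA, hDB⟩, ?_⟩, rfl⟩
        intro hp
        rw [Prod.mk.injEq] at hp
        rcases hne with h | h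
        · exact h hp.1
        · exact h hp.2
    · intro hJ
      rcases mem_union.mp hJ with h | h
      · obtain ⟨T, hT, rfl⟩ := mem_image.mp h
        constructor
        · exact (coconsistent_two_iff _).mpr
            ⟨by unfold stair; exact graphOf_subset, stair_upDown hn hr1 hr2 T⟩
        · exact contr_eq_iff' (by omega) (by omega)
            (by unfold stair; exact graphOf_subset) (stair_pr_n hn hr1 hr2 T)
      · obtain ⟨p, hp, rfl⟩ := mem_image.mp h
        constructor
        · exact (coconsistent_two_iff _).mpr
            ⟨by unfold fullg; exact graphOf_subset, fullg_upDown hn hr1 hr2 p.1 p.2⟩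
        · exact contr_eq_iff' (by omega) (by omega)
            (by unfold fullg; exact graphOf_subset) (fullg_pr_n hn hr1 hr2 p.1 p.2)
  have hcard1 : S1.card = Nat.choose (n-1) r := by
    rw [hS1, card_image_of_injOn (fun T hT T' hT' heq =>
      stair_injOn hn hr1 hr2 (mem_coe.mp hT) (mem_coe.mp hT') heq)]
    rw [card_powersetCard, Nat.card_Icc]
    congr 1
  have hmemP : ((∅, ∅) : Finset ℕ × Finset ℕ) ∈
      ((Icc 1 (r-1)).powerset ×ˢ (Icc 1 (n-1-r-1)).powerset) :=
    mem_product.mpr ⟨empty_mem_powerset _, empty_mem_powerset _⟩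
  have hcard2 : S2.card = 2 ^ (n-3) - 1 := by
    have hinj : Set.InjOn (fun p : Finset ℕ × Finset ℕ => fullg n r p.1 p.2)
        (((Icc 1 (r-1)).powerset ×ˢ (Icc 1 (n-1-r-1)).powerset).filter
          (fun p => p ≠ (∅, ∅))) := by
      intro p hp q hq heq
      rw [mem_coe, mem_filter] at hp hq
      have hp2 := mem_product.mp hp.1
      have hq2 := mem_product.mp hq.1
      have := fullg_injOn hn hr1 hr2 (mem_powerset.mp hp2.1) (mem_powerset.mp hp2.2)
        (mem_powerset.mp hq2.1) (mem_powerset.mp hq2.2) heq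
      exact Prod.ext this.1 this.2
    rw [hS2, card_image_of_injOn hinj, filter_ne', card_erase_of_mem hmemP,
      card_product, card_powerset, card_powerset, Nat.card_Icc, Nat.card_Icc]
    have hpow : 2 ^ (r - 1 + 1 - 1) * 2 ^ (n - 1 - r - 1 + 1 - 1) = 2 ^ (n-3) := by
      rw [← pow_add]
      congr 1
      omega
    rw [hpow]
  have hdisj : Disjoint S1 S2 := by
    rw [Finset.disjoint_left]
    intro a ha hb
    rw [hS1] at ha
    rw [hS2] at hb
    obtain ⟨T, hT, rfl⟩ := mem_image.mp ha
    obtain ⟨p, hp, heq⟩ := mem_image.mp hb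
    rw [mem_filter] at hp
    have hp2 := mem_product.mp hp.1
    have hne : p.1 ≠ ∅ ∨ p.2 ≠ ∅ := by
      by_contra hc
      push_neg at hc
      exact hp.2 (Prod.ext hc.1 hc.2)
    exact fullg_ne_stair hn hr1 hr2 (mem_powerset.mp hp2.1) (mem_powerset.mp hp2.2) hne T heq
  have hchoose : 1 ≤ Nat.choose (n-1) r := Nat.choose_pos (by omega)
  have hpow1 : 1 ≤ 2 ^ (n-3) := Nat.one_le_two_pow
  calc Nat.card {J : Finset (Finset ℕ) // CoConsistent n 2 J ∧
        contr J n = (Finset.Icc 1 r).image (fun i => ({i} : Finset ℕ))}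
      = Nat.card {J : Finset (Finset ℕ) // J ∈ S1 ∪ S2} :=
        Nat.card_congr (Equiv.subtypeEquivRight hiff)
    _ = (S1 ∪ S2).card := Nat.card_eq_finsetCard _
    _ = S1.card + S2.card := card_union_of_disjoint hdisj
    _ = 2 ^ (n - 3) + Nat.choose (n - 1) r - 1 := by
        rw [hcard1, hcard2]
        omega

-- ===== end aux =====

/-- For `n ≥ 3` and `1 ≤ r ≤ n-2`, the number of coconsistent subsets
`J` of the `2`-element subsets of `[n]` with `J / n = {{1}, …, {r}}` equals
`2^(n-3) + binom(n-1, r) - 1`, and the same count holds for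
`J / n = {{r+1}, …, {n-1}}`. -/
theorem coconsistent_contraction_initial_count (n r : ℕ) (hn : 3 ≤ n)
    (hr1 : 1 ≤ r) (hr2 : r ≤ n - 2) :
    Nat.card {J : Finset (Finset ℕ) // CoConsistent n 2 J ∧
        contr J n = (Finset.Icc 1 r).image (fun i => ({i} : Finset ℕ))} =
      2 ^ (n - 3) + Nat.choose (n - 1) r - 1 ∧
    Nat.card {J : Finset (Finset ℕ) // CoConsistent n 2 J ∧
        contr J n = (Finset.Icc (r + 1) (n - 1)).image (fun i => ({i} : Finset ℕ))} =
      2 ^ (n - 3) + Nat.choose (n - 1) r - 1 := by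
  have hcompl_co : ∀ J : Finset (Finset ℕ), CoConsistent n 2 J →
      CoConsistent n 2 (ksubsets n 2 \ J) := by
    intro J hc
    obtain ⟨hsub, hud⟩ := (coconsistent_two_iff J).mp hc
    apply (coconsistent_two_iff _).mpr
    refine ⟨sdiff_subset, fun x hx => ?_⟩
    rcases hud x hx with hd | hu
    · right
      intro i hi j hj hix hjx hij hpri
      rw [mem_sdiff] at hpri ⊢
      refine ⟨pr_mem_ksubsets hx hj (fun h => hjx h.symm), ?_⟩
      intro hmem
      exact hpri.2 (hd i hi j hj hix hjx hij hmem)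
    · left
      intro i hi j hj hix hjx hij hprj
      rw [mem_sdiff] at hprj ⊢
      refine ⟨pr_mem_ksubsets hx hi (fun h => hix h.symm), ?_⟩
      intro hmem
      exact hprj.2 (hu i hi j hj hix hjx hij hmem)
  refine ⟨count1 hn hr1 hr2, ?_⟩
  rw [← count1 hn hr1 hr2]
  apply Nat.card_congr
  refine ⟨fun J => ⟨ksubsets n 2 \ J.1, ?_, ?_⟩, fun J => ⟨ksubsets n 2 \ J.1, ?_, ?_⟩,
    ?_, ?_⟩
  · exact hcompl_co J.1 J.2.1
  · have hsub := J.2.1.1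
    have h2 := (contr_eq_iff2 (by omega) hsub).mp J.2.2
    apply contr_eq_iff' (by omega) (by omega) sdiff_subset
    intro i h1 hin
    rw [mem_sdiff]
    constructor
    · rintro ⟨_, hnot⟩
      by_contra hgt
      exact hnot ((h2 i h1 hin).mpr (by omega))
    · intro hir
      refine ⟨pr_mem_ksubsets (mem_Icc.mpr ⟨h1, by omega⟩)
        (mem_Icc.mpr ⟨by omega, le_rfl⟩) (by omega), ?_⟩
      intro hmem
      have := (h2 i h1 hin).mp hmem
      omega
  · exact hcompl_co J.1 J.2.1
  · have hsub := J.2.1.1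
    have h2 := (contr_eq_iff (by omega) (by omega) hsub).mp J.2.2
    apply (contr_eq_iff2 (by omega) sdiff_subset).mpr
    intro i h1 hin
    rw [mem_sdiff]
    constructor
    · rintro ⟨_, hnot⟩
      by_contra hgt
      exact hnot ((h2 i h1 hin).mpr (by omega))
    · intro hir
      refine ⟨pr_mem_ksubsets (mem_Icc.mpr ⟨h1, by omega⟩)
        (mem_Icc.mpr ⟨by omega, le_rfl⟩) (by omega), ?_⟩
      intro hmem
      have := (h2 i h1 hin).mp hmem
      omega
  · intro J
    apply Subtype.ext
    show ksubsets n 2 \ (ksubsets n 2 \ J.1) = J.1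
    rw [Finset.sdiff_sdiff_self_left]
    exact Finset.inter_eq_right.mpr J.2.1.1
  · intro J
    apply Subtype.ext
    show ksubsets n 2 \ (ksubsets n 2 \ J.1) = J.1
    rw [Finset.sdiff_sdiff_self_left]
    exact Finset.inter_eq_right.mpr J.2.1.1
end

section
/- Let n ≥ 5. The map φ sending a totally symmetric plane partition T in [n−3]^3 to the set φ(T) = {{x1, x2+1, x3+2} : (x1,x2,x3) ∈ T, x1 ≤ x2 ≤ x3} is a bijection from T_{n−3} onto the set of coconsistent subsets J of the 3-element subsets of [n] with contraction J/n = ∅, and for all T, T' ∈ T_{n−3} one has T ⊆ T' if and only if φ(T) ⊆ φ(T'); that is, φ is an isomorphism of posets ordered by inclusion. -/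
open Finset

/-- A plane partition in `[m]^3`: a downward-closed subset of `{1,…,m}^3`. -/
def IsPlanePartition (m : ℕ) (T : Finset (ℕ × ℕ × ℕ)) : Prop :=
  (∀ p ∈ T, p.1 ∈ Finset.Icc 1 m ∧ p.2.1 ∈ Finset.Icc 1 m ∧ p.2.2 ∈ Finset.Icc 1 m) ∧
  (∀ p ∈ T, ∀ q : ℕ × ℕ × ℕ,
    1 ≤ q.1 → q.1 ≤ p.1 → 1 ≤ q.2.1 → q.2.1 ≤ p.2.1 → 1 ≤ q.2.2 → q.2.2 ≤ p.2.2 → q ∈ T)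

/-- A totally symmetric plane partition in `[m]^3`. -/
def IsTSPP (m : ℕ) (T : Finset (ℕ × ℕ × ℕ)) : Prop :=
  IsPlanePartition m T ∧
  ∀ x y z : ℕ, (x, y, z) ∈ T →
    ((x, z, y) ∈ T ∧ (y, x, z) ∈ T ∧ (y, z, x) ∈ T ∧ (z, x, y) ∈ T ∧ (z, y, x) ∈ T)

/-- The map `φ(T) = {{x₁, x₂+1, x₃+2} : (x₁,x₂,x₃) ∈ T, x₁ ≤ x₂ ≤ x₃}`. -/
def tsppMap (T : Finset (ℕ × ℕ × ℕ)) : Finset (Finset ℕ) :=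
  (T.filter (fun p => p.1 ≤ p.2.1 ∧ p.2.1 ≤ p.2.2)).image
    (fun p => ({p.1, p.2.1 + 1, p.2.2 + 2} : Finset ℕ))


/-! ### Auxiliary definitions and lemmas -/

def min3 (x y z : ℕ) : ℕ := min x (min y z)
def max3 (x y z : ℕ) : ℕ := max x (max y z)
def mid3 (x y z : ℕ) : ℕ := x + y + z - min3 x y z - max3 x y z

lemma perm3 (x y z : ℕ) :
    (min3 x y z = x ∧ mid3 x y z = y ∧ max3 x y z = z) ∨
    (min3 x y z = x ∧ mid3 x y z = z ∧ max3 x y z = y) ∨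
    (min3 x y z = y ∧ mid3 x y z = x ∧ max3 x y z = z) ∨
    (min3 x y z = y ∧ mid3 x y z = z ∧ max3 x y z = x) ∨
    (min3 x y z = z ∧ mid3 x y z = x ∧ max3 x y z = y) ∨
    (min3 x y z = z ∧ mid3 x y z = y ∧ max3 x y z = x) := by
  unfold mid3 min3 max3; omega

lemma lexLt_insert {X : Finset ℕ} {i j : ℕ} (hi : i ∉ X) (hj : j ∉ X) :
    lexLt (insert i X) (insert j X) ↔ i < j := by
  constructor
  · rintro ⟨m, hm, hmB, hlow⟩
    rcases Finset.mem_insert.mp hm with rfl | hmX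
    · by_contra hlt
      have hij : m ≠ j := fun h => hmB (h ▸ Finset.mem_insert_self _ _)
      have hji : j < m := by omega
      have := (hlow j hji).mpr (Finset.mem_insert_self _ _)
      rcases Finset.mem_insert.mp this with rfl | hjX
      · omega
      · exact hj hjX
    · exact absurd (Finset.mem_insert_of_mem hmX) hmB
  · intro hij
    refine ⟨i, Finset.mem_insert_self _ _, ?_, ?_⟩
    · intro h
      rcases Finset.mem_insert.mp h with rfl | h
      · omega
      · exact hi h
    · intro a ha
      simp only [Finset.mem_insert]
      constructor
      · rintro (rfl | h); · omega
        · exact Or.inr h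
      · rintro (rfl | h); · omega
        · exact Or.inr h

/-- The downward-closure property of a family of finite sets. -/
def DownCl (J : Finset (Finset ℕ)) : Prop :=
  ∀ Y ∈ J, ∀ j ∈ Y, ∀ i, 1 ≤ i → i < j → i ∉ Y → insert i (Y.erase j) ∈ J

lemma card3 {a b c : ℕ} (hab : a < b) (hbc : b < c) : ({a, b, c} : Finset ℕ).card = 3 := by
  have h1 : a ∉ ({b, c} : Finset ℕ) := by simp; omega
  have h2 : b ∉ ({c} : Finset ℕ) := by simp; omega
  rw [Finset.card_insert_of_notMem h1, Finset.card_insert_of_notMem h2, Finset.card_singleton]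

lemma tripleEq {a b c a' b' c' : ℕ} (hab : a < b) (hbc : b < c) (hab' : a' < b')
    (hbc' : b' < c') (h : ({a, b, c} : Finset ℕ) = {a', b', c'}) :
    a = a' ∧ b = b' ∧ c = c' := by
  have h1 : a ∈ ({a', b', c'} : Finset ℕ) := h ▸ (by simp)
  have h2 : b ∈ ({a', b', c'} : Finset ℕ) := h ▸ (by simp)
  have h3 : c ∈ ({a', b', c'} : Finset ℕ) := h ▸ (by simp)
  have h4 : a' ∈ ({a, b, c} : Finset ℕ) := h ▸ (by simp)
  have h5 : b' ∈ ({a, b, c} : Finset ℕ) := h ▸ (by simp)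
  have h6 : c' ∈ ({a, b, c} : Finset ℕ) := h ▸ (by simp)
  simp only [Finset.mem_insert, Finset.mem_singleton] at h1 h2 h3 h4 h5 h6
  omega

lemma charB (n : ℕ) (hn : 5 ≤ n) (J : Finset (Finset ℕ)) :
    (CoConsistent n 3 J ∧ contr J n = ∅) ↔
    (J ⊆ ksubsets n 3 ∧ (∀ X ∈ J, n ∉ X) ∧ DownCl J) := by
  constructor
  · rintro ⟨⟨hsub, hcc⟩, hctr⟩
    have hnoN : ∀ X ∈ J, n ∉ X := by
      intro X hX hnX
      have : X ∈ J.filter (fun X => n ∈ X) := Finset.mem_filter.mpr ⟨hX, hnX⟩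
      have : X.erase n ∈ contr J n := Finset.mem_image_of_mem _ this
      rw [hctr] at this
      exact absurd this (Finset.notMem_empty _)
    refine ⟨hsub, hnoN, ?_⟩
    intro Y hY j hj i hi1 hij hiY
    have hYk := Finset.mem_powersetCard.mp (hsub hY)
    set X := Y.erase j with hXdef
    have hjX : j ∉ X := Finset.notMem_erase _ _
    have hXsub : X ⊆ Finset.Icc 1 n := (Finset.erase_subset _ _).trans hYk.1
    have hXcard : X.card = 2 := by rw [hXdef, Finset.card_erase_of_mem hj, hYk.2]
    have hX2 : X ∈ ksubsets n (3-1) := Finset.mem_powersetCard.mpr ⟨hXsub, hXcard⟩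
    have hjn : j ≤ n := (Finset.mem_Icc.mp (hYk.1 hj)).2
    have hiX : i ∉ X := fun h => hiY (Finset.erase_subset _ _ h)
    have hYeq : insert j X = Y := Finset.insert_erase hj
    have hmemA : insert i X ∈ copacket n X := by
      apply Finset.mem_image_of_mem
      exact Finset.mem_sdiff.mpr ⟨Finset.mem_Icc.mpr ⟨hi1, by omega⟩, hiX⟩
    have hmemY : Y ∈ copacket n X := by
      rw [← hYeq]
      apply Finset.mem_image_of_mem
      exact Finset.mem_sdiff.mpr ⟨Finset.mem_Icc.mpr ⟨by omega, hjn⟩, hjX⟩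
    have hnY : n ∉ Y := hnoN Y hY
    have hnX : n ∉ X := fun h => hnY (Finset.erase_subset _ _ h)
    rcases hcc X hX2 with hp | hs
    · exact hp _ hmemA _ hmemY hY (by rw [← hYeq]; exact (lexLt_insert hiX hjX).mpr hij)
    · exfalso
      have hmemZ : insert n X ∈ copacket n X := by
        apply Finset.mem_image_of_mem
        exact Finset.mem_sdiff.mpr ⟨Finset.mem_Icc.mpr ⟨by omega, le_refl n⟩, hnX⟩
      have hjnlt : j < n := by
        rcases lt_or_eq_of_le hjn with h | h
        · exact h
        · exact absurd (h ▸ hj) hnY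
      have : insert n X ∈ J := hs _ hmemY _ hmemZ hY
        (by rw [← hYeq]; exact (lexLt_insert hjX hnX).mpr hjnlt)
      exact hnoN _ this (Finset.mem_insert_self _ _)
  · rintro ⟨hsub, hnoN, hdown⟩
    constructor
    · refine ⟨hsub, ?_⟩
      intro X hX
      left
      intro A hA B hB hBJ hlex
      obtain ⟨i, hi, rfl⟩ := Finset.mem_image.mp hA
      obtain ⟨j, hj, rfl⟩ := Finset.mem_image.mp hB
      rw [Finset.mem_sdiff, Finset.mem_Icc] at hi hj
      have hij : i < j := (lexLt_insert hi.2 hj.2).mp hlex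
      have := hdown _ hBJ j (Finset.mem_insert_self _ _) i hi.1.1 hij
        (by simp only [Finset.mem_insert]; push_neg; exact ⟨by omega, hi.2⟩)
      rwa [Finset.erase_insert hj.2] at this
    · apply Finset.image_eq_empty.mpr
      rw [Finset.filter_eq_empty_iff]
      intro X hX
      exact hnoN X hX

lemma mem_tsppMap {m : ℕ} {T : Finset (ℕ × ℕ × ℕ)} (hPP : IsPlanePartition m T)
    (Y : Finset ℕ) :
    Y ∈ tsppMap T ↔ ∃ a b c : ℕ, a < b ∧ b < c ∧ (a, b - 1, c - 2) ∈ T ∧ Y = {a, b, c} := by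
  constructor
  · intro hY
    obtain ⟨p, hp, hpY⟩ := Finset.mem_image.mp hY
    rw [Finset.mem_filter] at hp
    refine ⟨p.1, p.2.1 + 1, p.2.2 + 2, by omega, by omega, ?_, hpY.symm⟩
    simpa using hp.1
  · rintro ⟨a, b, c, hab, hbc, hT, rfl⟩
    obtain ⟨h1, h2, h3⟩ := hPP.1 _ hT
    simp only [Finset.mem_Icc] at h1 h2 h3
    apply Finset.mem_image.mpr
    refine ⟨(a, b - 1, c - 2), Finset.mem_filter.mpr ⟨hT, by simp; omega⟩, ?_⟩
    show ({a, (b - 1) + 1, (c - 2) + 2} : Finset ℕ) = {a, b, c}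
    rw [show b - 1 + 1 = b by omega, show c - 2 + 2 = c by omega]

lemma downT {m : ℕ} {T : Finset (ℕ × ℕ × ℕ)} (hPP : IsPlanePartition m T)
    {a b c p q r : ℕ} (h : (a, b - 1, c - 2) ∈ T) (hab : a < b) (hbc : b < c)
    (h1 : 1 ≤ p) (hpq : p < q) (hqr : q < r) (hpa : p ≤ a) (hqb : q ≤ b) (hrc : r ≤ c) :
    (p, q - 1, r - 2) ∈ T := by
  obtain ⟨c1, c2, c3⟩ := hPP.1 _ h
  dsimp only at c1 c2 c3
  simp only [Finset.mem_Icc] at c1 c2 c3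
  exact hPP.2 _ h (p, q - 1, r - 2) (by dsimp only; omega) (by dsimp only; omega)
    (by dsimp only; omega) (by dsimp only; omega) (by dsimp only; omega) (by dsimp only; omega)

lemma sorted_mem_equiv {m : ℕ} (x y z : ℕ) (T : Finset (ℕ × ℕ × ℕ)) (hT : IsTSPP m T) :
    (x, y, z) ∈ T ↔ (min3 x y z, mid3 x y z, max3 x y z) ∈ T := by
  rcases perm3 x y z with h | h | h | h | h | h <;> rw [h.1, h.2.1, h.2.2] <;>
    constructor <;> intro hh <;>
    first
      | exact hh
      | exact (hT.2 _ _ _ hh).1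
      | exact (hT.2 _ _ _ hh).2.1
      | exact (hT.2 _ _ _ hh).2.2.1
      | exact (hT.2 _ _ _ hh).2.2.2.1
      | exact (hT.2 _ _ _ hh).2.2.2.2

lemma downCl_tsppMap {m : ℕ} {T : Finset (ℕ × ℕ × ℕ)} (hPP : IsPlanePartition m T) :
    DownCl (tsppMap T) := by
  intro Y hY j hj i hi1 hij hiY
  obtain ⟨a, b, c, hab, hbc, hTm, rfl⟩ := (mem_tsppMap hPP Y).mp hY
  obtain ⟨c1, c2, c3⟩ := hPP.1 _ hTm
  dsimp only at c1 c2 c3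
  rw [Finset.mem_Icc] at c1 c2 c3
  simp only [Finset.mem_insert, Finset.mem_singleton] at hj hiY
  push_neg at hiY
  obtain ⟨hia, hib, hic⟩ := hiY
  apply (mem_tsppMap hPP _).mpr
  rcases hj with hj | hj | hj
  · refine ⟨min3 i b c, mid3 i b c, max3 i b c, ?_, ?_, ?_, ?_⟩
    · (try simp only [mid3, min3, max3]); omega
    · (try simp only [mid3, min3, max3]); omega
    · exact downT hPP hTm hab hbc (by (try simp only [mid3, min3, max3]); omega)
        (by (try simp only [mid3, min3, max3]); omega)
        (by (try simp only [mid3, min3, max3]); omega)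
        (by (try simp only [mid3, min3, max3]); omega)
        (by (try simp only [mid3, min3, max3]); omega)
        (by (try simp only [mid3, min3, max3]); omega)
    · ext t
      simp only [Finset.mem_insert, Finset.mem_erase, Finset.mem_singleton]
      (try simp only [mid3, min3, max3]); omega
  · refine ⟨min3 i a c, mid3 i a c, max3 i a c, ?_, ?_, ?_, ?_⟩
    · (try simp only [mid3, min3, max3]); omega
    · (try simp only [mid3, min3, max3]); omega
    · exact downT hPP hTm hab hbc (by (try simp only [mid3, min3, max3]); omega)
        (by (try simp only [mid3, min3, max3]); omega)
        (by (try simp only [mid3, min3, max3]); omega)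
        (by (try simp only [mid3, min3, max3]); omega)
        (by (try simp only [mid3, min3, max3]); omega)
        (by (try simp only [mid3, min3, max3]); omega)
    · ext t
      simp only [Finset.mem_insert, Finset.mem_erase, Finset.mem_singleton]
      (try simp only [mid3, min3, max3]); omega
  · refine ⟨min3 i a b, mid3 i a b, max3 i a b, ?_, ?_, ?_, ?_⟩
    · (try simp only [mid3, min3, max3]); omega
    · (try simp only [mid3, min3, max3]); omega
    · exact downT hPP hTm hab hbc (by (try simp only [mid3, min3, max3]); omega)
        (by (try simp only [mid3, min3, max3]); omega)
        (by (try simp only [mid3, min3, max3]); omega)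
        (by (try simp only [mid3, min3, max3]); omega)
        (by (try simp only [mid3, min3, max3]); omega)
        (by (try simp only [mid3, min3, max3]); omega)
    · ext t
      simp only [Finset.mem_insert, Finset.mem_erase, Finset.mem_singleton]
      (try simp only [mid3, min3, max3]); omega

lemma down3 {J : Finset (Finset ℕ)} (hd : DownCl J) {a b c a' b' c' : ℕ}
    (h : ({a, b, c} : Finset ℕ) ∈ J) (hab : a < b) (hbc : b < c) (h1 : 1 ≤ a')
    (hab' : a' < b') (hbc' : b' < c') (ha : a' ≤ a) (hb : b' ≤ b) (hc : c' ≤ c) :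
    ({a', b', c'} : Finset ℕ) ∈ J := by
  have step1 : ({a', b, c} : Finset ℕ) ∈ J := by
    rcases eq_or_lt_of_le ha with rfl | hlt
    · exact h
    · have := hd _ h a (by simp) a' h1 hlt (by simp; omega)
      have he : insert a' (({a, b, c} : Finset ℕ).erase a) = {a', b, c} := by
        ext t
        simp only [Finset.mem_insert, Finset.mem_erase, Finset.mem_singleton]
        omega
      rwa [he] at this
  have step2 : ({a', b', c} : Finset ℕ) ∈ J := by
    rcases eq_or_lt_of_le hb with rfl | hlt
    · exact step1
    · have := hd _ step1 b (by simp) b' (by omega) hlt (by simp; omega)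
      have he : insert b' (({a', b, c} : Finset ℕ).erase b) = {a', b', c} := by
        ext t
        simp only [Finset.mem_insert, Finset.mem_erase, Finset.mem_singleton]
        omega
      rwa [he] at this
  rcases eq_or_lt_of_le hc with rfl | hlt
  · exact step2
  · have := hd _ step2 c (by simp) c' (by omega) hlt (by simp; omega)
    have he : insert c' (({a', b', c} : Finset ℕ).erase c) = {a', b', c'} := by
      ext t
      simp only [Finset.mem_insert, Finset.mem_erase, Finset.mem_singleton]
      omega
    rwa [he] at this

/-- The inverse construction: the TSPP associated to a family `J`. -/
def Tof (m : ℕ) (J : Finset (Finset ℕ)) : Finset (ℕ × ℕ × ℕ) :=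
  ((Finset.Icc 1 m ×ˢ Finset.Icc 1 m ×ˢ Finset.Icc 1 m)).filter
    (fun p => ({min3 p.1 p.2.1 p.2.2, mid3 p.1 p.2.1 p.2.2 + 1,
      max3 p.1 p.2.1 p.2.2 + 2} : Finset ℕ) ∈ J)

lemma symm3 (x y z : ℕ) :
    (min3 x z y = min3 x y z ∧ mid3 x z y = mid3 x y z ∧ max3 x z y = max3 x y z) ∧
    (min3 y x z = min3 x y z ∧ mid3 y x z = mid3 x y z ∧ max3 y x z = max3 x y z) ∧
    (min3 y z x = min3 x y z ∧ mid3 y z x = mid3 x y z ∧ max3 y z x = max3 x y z) ∧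
    (min3 z x y = min3 x y z ∧ mid3 z x y = mid3 x y z ∧ max3 z x y = max3 x y z) ∧
    (min3 z y x = min3 x y z ∧ mid3 z y x = mid3 x y z ∧ max3 z y x = max3 x y z) := by
  unfold mid3 min3 max3
  omega

lemma Tof_mem {m : ℕ} {J : Finset (Finset ℕ)} {x y z : ℕ} :
    (x, y, z) ∈ Tof m J ↔ (1 ≤ x ∧ x ≤ m ∧ 1 ≤ y ∧ y ≤ m ∧ 1 ≤ z ∧ z ≤ m) ∧
      ({min3 x y z, mid3 x y z + 1, max3 x y z + 2} : Finset ℕ) ∈ J := by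
  unfold Tof
  rw [Finset.mem_filter]
  simp [Finset.mem_product, Finset.mem_Icc, and_assoc]

lemma Tof_isTSPP {m : ℕ} {J : Finset (Finset ℕ)} (hd : DownCl J) : IsTSPP m (Tof m J) := by
  refine ⟨⟨?_, ?_⟩, ?_⟩
  · rintro ⟨x, y, z⟩ hp
    rw [Tof_mem] at hp
    simp only [Finset.mem_Icc]
    exact ⟨⟨hp.1.1, hp.1.2.1⟩, ⟨hp.1.2.2.1, hp.1.2.2.2.1⟩, hp.1.2.2.2.2⟩
  · rintro ⟨x, y, z⟩ hp ⟨x', y', z'⟩ q1 q2 q3 q4 q5 q6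
    dsimp only at q1 q2 q3 q4 q5 q6
    rw [Tof_mem] at hp ⊢
    obtain ⟨hbox, hcond⟩ := hp
    refine ⟨by omega, ?_⟩
    refine down3 hd hcond ?_ ?_ ?_ ?_ ?_ ?_ ?_ ?_ <;>
      (try simp only [mid3, min3, max3]) <;> omega
  · intro x y z hxyz
    rw [Tof_mem] at hxyz
    obtain ⟨hbox, hcond⟩ := hxyz
    obtain ⟨s1, s2, s3, s4, s5⟩ := symm3 x y z
    refine ⟨?_, ?_, ?_, ?_, ?_⟩ <;> rw [Tof_mem]
    · exact ⟨by omega, by rw [s1.1, s1.2.1, s1.2.2]; exact hcond⟩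
    · exact ⟨by omega, by rw [s2.1, s2.2.1, s2.2.2]; exact hcond⟩
    · exact ⟨by omega, by rw [s3.1, s3.2.1, s3.2.2]; exact hcond⟩
    · exact ⟨by omega, by rw [s4.1, s4.2.1, s4.2.2]; exact hcond⟩
    · exact ⟨by omega, by rw [s5.1, s5.2.1, s5.2.2]; exact hcond⟩

lemma tsppMap_subset_rev {m : ℕ} {T T' : Finset (ℕ × ℕ × ℕ)} (hT : IsTSPP m T)
    (hT' : IsTSPP m T') (h : tsppMap T ⊆ tsppMap T') : T ⊆ T' := by
  intro p hp
  obtain ⟨x, y, z⟩ := p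
  rw [sorted_mem_equiv x y z T hT] at hp
  rw [sorted_mem_equiv x y z T' hT']
  have hord : min3 x y z ≤ mid3 x y z ∧ mid3 x y z ≤ max3 x y z := by
    (try simp only [mid3, min3, max3]); omega
  have hmem : ({min3 x y z, mid3 x y z + 1, max3 x y z + 2} : Finset ℕ) ∈ tsppMap T := by
    apply (mem_tsppMap hT.1 _).mpr
    exact ⟨_, _, _, by omega, by omega, by simpa using hp, rfl⟩
  obtain ⟨a', b', c', hab', hbc', hT'm, heq⟩ := (mem_tsppMap hT'.1 _).mp (h hmem)
  obtain ⟨e1, e2, e3⟩ := tripleEq (by omega) (by omega) hab' hbc' heq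
  have he : (a', b' - 1, c' - 2) = (min3 x y z, mid3 x y z, max3 x y z) := by
    rw [← e1, ← e2, ← e3]
    simp
  rwa [he] at hT'm

/-- For `n ≥ 5`, the map `φ` is a bijection from the totally symmetric
plane partitions in `[n-3]^3` onto the coconsistent subsets `J` of the `3`-element
subsets of `[n]` with `J / n = ∅`, and it is an isomorphism of posets under
inclusion. -/
theorem tspp_bijection (n : ℕ) (hn : 5 ≤ n) :
    (∀ T, IsTSPP (n - 3) T →
        CoConsistent n 3 (tsppMap T) ∧ contr (tsppMap T) n = ∅) ∧
    (∀ T T', IsTSPP (n - 3) T → IsTSPP (n - 3) T' →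
        tsppMap T = tsppMap T' → T = T') ∧
    (∀ J, CoConsistent n 3 J → contr J n = ∅ →
        ∃ T, IsTSPP (n - 3) T ∧ tsppMap T = J) ∧
    (∀ T T', IsTSPP (n - 3) T → IsTSPP (n - 3) T' →
        (T ⊆ T' ↔ tsppMap T ⊆ tsppMap T')) := by
  constructor
  · intro T hT
    apply (charB n hn _).mpr
    refine ⟨?_, ?_, downCl_tsppMap hT.1⟩
    · intro Y hY
      obtain ⟨a, b, c, hab, hbc, hTm, rfl⟩ := (mem_tsppMap hT.1 Y).mp hY
      obtain ⟨c1, c2, c3⟩ := hT.1.1 _ hTm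
      dsimp only at c1 c2 c3
      rw [Finset.mem_Icc] at c1 c2 c3
      apply Finset.mem_powersetCard.mpr
      constructor
      · intro t ht
        simp only [Finset.mem_insert, Finset.mem_singleton] at ht
        rw [Finset.mem_Icc]
        omega
      · exact card3 hab hbc
    · intro Y hY
      obtain ⟨a, b, c, hab, hbc, hTm, rfl⟩ := (mem_tsppMap hT.1 Y).mp hY
      obtain ⟨c1, c2, c3⟩ := hT.1.1 _ hTm
      dsimp only at c1 c2 c3
      rw [Finset.mem_Icc] at c1 c2 c3
      intro hmem
      simp only [Finset.mem_insert, Finset.mem_singleton] at hmem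
      omega
  refine ⟨?_, ?_, ?_⟩
  · intro T T' hT hT' heq
    exact Finset.Subset.antisymm (tsppMap_subset_rev hT hT' heq.le)
      (tsppMap_subset_rev hT' hT heq.ge)
  · intro J hcc hctr
    obtain ⟨hsub, hnoN, hdown⟩ := (charB n hn J).mp ⟨hcc, hctr⟩
    refine ⟨Tof (n - 3) J, Tof_isTSPP hdown, ?_⟩
    have hPP := (Tof_isTSPP (m := n - 3) (J := J) hdown).1
    apply Finset.Subset.antisymm
    · intro Y hY
      obtain ⟨a, b, c, hab, hbc, hTm, rfl⟩ := (mem_tsppMap hPP Y).mp hY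
      rw [Tof_mem] at hTm
      obtain ⟨hbox, hcond⟩ := hTm
      have e1 : min3 a (b - 1) (c - 2) = a := by simp only [min3]; omega
      have e2 : mid3 a (b - 1) (c - 2) = b - 1 := by
        (try simp only [mid3, min3, max3]); omega
      have e3 : max3 a (b - 1) (c - 2) = c - 2 := by simp only [max3]; omega
      rw [e1, e2, e3, show b - 1 + 1 = b by omega, show c - 2 + 2 = c by omega] at hcond
      exact hcond
    · intro Y hY
      have hYk := Finset.mem_powersetCard.mp (hsub hY)
      obtain ⟨x, y, z, hxy, hxz, hyz, rfl⟩ := Finset.card_eq_three.mp hYk.2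
      have hx : x ∈ Finset.Icc 1 n := hYk.1 (by simp)
      have hy : y ∈ Finset.Icc 1 n := hYk.1 (by simp)
      have hz : z ∈ Finset.Icc 1 n := hYk.1 (by simp)
      rw [Finset.mem_Icc] at hx hy hz
      have hnY := hnoN _ hY
      simp only [Finset.mem_insert, Finset.mem_singleton] at hnY
      push_neg at hnY
      have f1 : min3 x y z < mid3 x y z := by
        (try simp only [mid3, min3, max3]); omega
      have f2 : mid3 x y z < max3 x y z := by
        (try simp only [mid3, min3, max3]); omega
      have f3 : 1 ≤ min3 x y z := by
        (try simp only [mid3, min3, max3]); omega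
      have f4 : max3 x y z ≤ n - 1 := by
        (try simp only [mid3, min3, max3]); omega
      have hYeq : ({x, y, z} : Finset ℕ) = {min3 x y z, mid3 x y z, max3 x y z} := by
        ext t
        simp only [Finset.mem_insert, Finset.mem_singleton]
        (try simp only [mid3, min3, max3]); omega
      rw [hYeq] at hY ⊢
      set a := min3 x y z with hadef
      set b := mid3 x y z with hbdef
      set c := max3 x y z with hcdef
      apply (mem_tsppMap hPP _).mpr
      refine ⟨a, b, c, f1, f2, ?_, rfl⟩
      rw [Tof_mem]
      have e1 : min3 a (b - 1) (c - 2) = a := by simp only [min3]; omega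
      have e2 : mid3 a (b - 1) (c - 2) = b - 1 := by
        (try simp only [mid3, min3, max3]); omega
      have e3 : max3 a (b - 1) (c - 2) = c - 2 := by simp only [max3]; omega
      refine ⟨by omega, ?_⟩
      rw [e1, e2, e3, show b - 1 + 1 = b by omega, show c - 2 + 2 = c by omega]
      exact hY
  · intro T T' hT hT'
    constructor
    · intro hsub
      exact Finset.image_subset_image (Finset.filter_subset_filter _ hsub)
    · exact tsppMap_subset_rev hT hT'
end
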